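/- arXiv:2003.02180 — 11 statements merged into one kernel-verified Lean document; each statement's English description precedes it below -/
import Mathlib

section
/- Two matrix Fisher–Gaussian densities with parameter sets (μ, Σ, P, U, S, V) and (μ̃, Σ̃, P̃, Ũ, S̃, Ṽ) on SO(3)×ℝⁿ coincide at every point (R, x) ∈ SO(3)×ℝⁿ if and only if USVᵀ = ŨS̃Ṽᵀ, μ_c(R) = μ̃_c(R) for all R ∈ SO(3), and Σ_c = Σ̃_c. -/
open Matrix MeasureTheory Real

noncomputable section

abbrev Mat3 := Matrix (Fin 3) (Fin 3) ℝ

instance : MeasurableSpace Mat3 :=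
  show MeasurableSpace (Fin 3 → Fin 3 → ℝ) from inferInstance

/-- `SO(3)`: real 3×3 matrices with `RᵀR = I` and `det R = 1`. -/
def SO3 : Set Mat3 := {R | Rᵀ * R = 1 ∧ R.det = 1}

/-- The hat map `∧ : ℝ³ → ℝ^{3×3}`, `(hat v) w = v × w`. -/
def hat (v : Fin 3 → ℝ) : Mat3 :=
  !![0, -v 2, v 1; v 2, 0, -v 0; -v 1, v 0, 0]

/-- The vee map `∨`, inverse of the hat map on skew-symmetric matrices. -/
def vee (A : Mat3) : Fin 3 → ℝ := ![A 2 1, A 0 2, A 1 0]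

/-- `ν` is the bi-invariant Haar probability measure on `SO(3)`. -/
def IsHaarSO3 (ν : Measure Mat3) : Prop :=
  IsProbabilityMeasure ν ∧ ν SO3ᶜ = 0 ∧
    (∀ A ∈ SO3, Measure.map (fun R => A * R) ν = ν) ∧
    (∀ A ∈ SO3, Measure.map (fun R => R * A) ν = ν)

/-- The normalizing constant `c(F) = ∫_{SO(3)} etr(FᵀQ) dQ`. -/
def cF (ν : Measure Mat3) (F : Mat3) : ℝ := ∫ Q, Real.exp ((Fᵀ * Q).trace) ∂ν

/-- The tangent-space deviation `ν_R = (QS − SQᵀ)∨`, `Q = UᵀRV`. -/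
def nuR (U S V R : Mat3) : Fin 3 → ℝ :=
  vee ((Uᵀ * R * V) * S - S * (Uᵀ * R * V)ᵀ)

/-- `Σ_c = Σ − P(tr(S)I − S)Pᵀ`. -/
def sigmaC {n : ℕ} (Sig : Matrix (Fin n) (Fin n) ℝ) (P : Matrix (Fin n) (Fin 3) ℝ)
    (S : Mat3) : Matrix (Fin n) (Fin n) ℝ :=
  Sig - P * (S.trace • (1 : Mat3) - S) * Pᵀ

/-- The matrix Fisher–Gaussian density with parameters `(μ, Σ, P, U, S, V)`. -/
def mfg {n : ℕ} (ν : Measure Mat3) (μ : Fin n → ℝ) (Sig : Matrix (Fin n) (Fin n) ℝ)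
    (P : Matrix (Fin n) (Fin 3) ℝ) (U S V : Mat3) (R : Mat3) (x : Fin n → ℝ) : ℝ :=
  (cF ν (U * S * Vᵀ) * Real.sqrt ((2 * Real.pi) ^ n * (sigmaC Sig P S).det))⁻¹ *
    Real.exp (-(1/2) * ((x - (μ + P.mulVec (nuR U S V R))) ⬝ᵥ
      ((sigmaC Sig P S)⁻¹ *ᵥ (x - (μ + P.mulVec (nuR U S V R)))))) *
    Real.exp ((U * S * Vᵀ * Rᵀ).trace)

/-! Once the normalizing constant `c(F)` is known to be positive (it integrates a positive, bounded
function against a probability measure), equal densities have equal logarithms. For fixed `R`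
these are Gaussian log-densities in `x` up to additive constants, and comparing the two quadratic
polynomials forces `Σ_c = Σ̃_c` and `μ_c(R) = μ̃_c(R)`. At `x = μ_c(R)` what is left says that
`R ↦ tr((F - F̃) Rᵀ)` is constant on `SO(3)`. Replacing `R` by `D R` for the four diagonal sign
matrices `D ∈ SO(3)`, which sum to zero, shows that every row of the entrywise product
`(F - F̃) ∘ R` sums to zero; for the three cyclic permutation matrices `R` this isolates every
entry of `F - F̃`. -/

namespace Matrix

variable {ι : Type*} [Fintype ι]

theorem IsSymm.dotProduct_mulVec_comm {B : Matrix ι ι ℝ} (hB : B.IsSymm) (v w : ι → ℝ) :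
    v ⬝ᵥ B *ᵥ w = w ⬝ᵥ B *ᵥ v := by
  rw [dotProduct_mulVec, ← mulVec_transpose, hB.eq, dotProduct_comm]

theorem IsSymm.quad_sub {B : Matrix ι ι ℝ} (hB : B.IsSymm) (x w : ι → ℝ) :
    (x - w) ⬝ᵥ B *ᵥ (x - w) = x ⬝ᵥ B *ᵥ x - 2 * (x ⬝ᵥ B *ᵥ w) + w ⬝ᵥ B *ᵥ w := by
  rw [mulVec_sub, dotProduct_sub, sub_dotProduct, sub_dotProduct, hB.dotProduct_mulVec_comm w x]
  ring

theorem IsSymm.eq_zero_of_quad_eq_zero {B : Matrix ι ι ℝ} (hB : B.IsSymm)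
    (h : ∀ x, x ⬝ᵥ B *ᵥ x = 0) : B = 0 := by
  have polar (v w : ι → ℝ) : v ⬝ᵥ B *ᵥ w = 0 := by
    have := hB.quad_sub v w
    rw [h, h, h] at this
    linarith
  refine ext_iff_mulVec.2 fun w => ?_
  rw [zero_mulVec, ← dotProduct_self_eq_zero]
  exact polar _ w

theorem IsSymm.eq_and_mulVec_eq_of_quad_sub_eq_add_const {A A' : Matrix ι ι ℝ}
    (hA : A.IsSymm) (hA' : A'.IsSymm) {m m' : ι → ℝ} {κ : ℝ}
    (h : ∀ x, (x - m) ⬝ᵥ A *ᵥ (x - m) = (x - m') ⬝ᵥ A' *ᵥ (x - m') + κ) :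
    A = A' ∧ A *ᵥ m = A' *ᵥ m' := by
  set b := A *ᵥ m - A' *ᵥ m'
  set c := κ + m' ⬝ᵥ A' *ᵥ m' - m ⬝ᵥ A *ᵥ m
  have key (x : ι → ℝ) : x ⬝ᵥ (A - A') *ᵥ x - 2 * (x ⬝ᵥ b) = c := by
    have := h x
    rw [hA.quad_sub, hA'.quad_sub] at this
    rw [sub_mulVec, dotProduct_sub, dotProduct_sub]
    linarith
  have hc : c = 0 := by simpa using (key 0).symm
  have hb (x : ι → ℝ) : x ⬝ᵥ b = 0 := by
    have := key (-x)
    simp only [mulVec_neg, dotProduct_neg, neg_dotProduct, neg_neg] at this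
    linarith [key x]
  have hquad (x : ι → ℝ) : x ⬝ᵥ (A - A') *ᵥ x = 0 := by linarith [key x, hb x]
  refine ⟨sub_eq_zero.1 ((hA.sub hA').eq_zero_of_quad_eq_zero hquad), ?_⟩
  exact sub_eq_zero.1 (dotProduct_self_eq_zero.1 (hb b))

theorem PosDef.eq_and_eq_of_gaussian_exponent_eq [DecidableEq ι] {C C' : Matrix ι ι ℝ}
    (hC : C.PosDef) (hC' : C'.PosDef) {m m' : ι → ℝ} {a a' : ℝ}
    (h : ∀ x, -(1 / 2) * ((x - m) ⬝ᵥ C⁻¹ *ᵥ (x - m)) + a =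
      -(1 / 2) * ((x - m') ⬝ᵥ C'⁻¹ *ᵥ (x - m')) + a') :
    C = C' ∧ m = m' := by
  obtain ⟨hinv, hm⟩ :=
    (isHermitian_iff_isSymm.1 hC.isHermitian).inv.eq_and_mulVec_eq_of_quad_sub_eq_add_const
      (isHermitian_iff_isSymm.1 hC'.isHermitian).inv (κ := 2 * (a - a'))
      fun x => by linear_combination -2 * h x
  obtain rfl : C = C' := inv_inj hinv hC.det_pos.ne'.isUnit
  exact ⟨rfl, mulVec_injective_of_det_ne_zero hC.inv.det_pos.ne' hm⟩

end Matrix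

theorem mem_SO3_iff {R : Mat3} : R ∈ SO3 ↔ R ∈ specialUnitaryGroup (Fin 3) ℝ := by
  rw [mem_specialUnitaryGroup_iff, mem_unitaryGroup_iff', star_eq_conjTranspose,
    conjTranspose_eq_transpose_of_trivial]
  rfl

theorem mul_mem_SO3 {A B : Mat3} (hA : A ∈ SO3) (hB : B ∈ SO3) : A * B ∈ SO3 :=
  mem_SO3_iff.2 (mul_mem (mem_SO3_iff.1 hA) (mem_SO3_iff.1 hB))

theorem abs_apply_le_one_of_mem_SO3 {R : Mat3} (hR : R ∈ SO3) (i j : Fin 3) : |R i j| ≤ 1 :=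
  entry_norm_bound_of_unitary (mem_SO3_iff.1 hR).1 i j

theorem permMatrix_mem_SO3 {σ : Equiv.Perm (Fin 3)} (hσ : Equiv.Perm.sign σ = 1) :
    σ.permMatrix ℝ ∈ SO3 := by
  refine ⟨?_, by simp [hσ]⟩
  rw [transpose_permMatrix, ← permMatrix_mul, mul_inv_cancel, permMatrix_one]

theorem sign_addRight_fin_three (k : Fin 3) : Equiv.Perm.sign (Equiv.addRight k) = 1 := by
  fin_cases k <;> decide

theorem diagonal_mem_SO3 {d : Fin 3 → ℝ} (hd : ∀ i, d i ^ 2 = 1) (hdet : ∏ i, d i = 1) :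
    diagonal d ∈ SO3 := by
  refine ⟨?_, by rwa [det_diagonal]⟩
  rw [diagonal_transpose, diagonal_mul_diagonal, ← diagonal_one]
  simp only [← sq, hd]

theorem trace_mul_transpose_diagonal_mul (A R : Mat3) (d : Fin 3 → ℝ) :
    (A * (diagonal d * R)ᵀ).trace = ∑ i, d i * ∑ j, A i j * R i j := by
  simp only [trace, diag_apply, mul_apply, transpose_apply, diagonal_apply, ite_mul, zero_mul,
    Finset.sum_ite_eq, Finset.mem_univ, if_true, Finset.mul_sum]
  exact Finset.sum_congr rfl fun i _ => Finset.sum_congr rfl fun j _ => by ring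

theorem sum_mul_apply_eq_zero_of_trace_mul_transpose_const {A : Mat3} {k : ℝ}
    (h : ∀ R ∈ SO3, (A * Rᵀ).trace = k) {R : Mat3} (hR : R ∈ SO3) (i : Fin 3) :
    ∑ j, A i j * R i j = 0 := by
  set w : Fin 3 → ℝ := fun i => ∑ j, A i j * R i j
  have sign_change (a b : ℝ) (ha : a ^ 2 = 1) (hb : b ^ 2 = 1) :
      a * w 0 + b * w 1 + a * b * w 2 = k := by
    have hd : ∀ i, ![a, b, a * b] i ^ 2 = 1 := by
      intro i; fin_cases i <;> simp [mul_pow, ha, hb]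
    have hdet : ∏ i, ![a, b, a * b] i = 1 := by
      simp only [Fin.prod_univ_three, cons_val_zero, cons_val_one, cons_val]
      linear_combination b ^ 2 * ha + hb
    rw [← h _ (mul_mem_SO3 (diagonal_mem_SO3 hd hdet) hR), trace_mul_transpose_diagonal_mul,
      Fin.sum_univ_three]
    rfl
  have e₀ := sign_change 1 1 (by norm_num) (by norm_num)
  have e₁ := sign_change 1 (-1) (by norm_num) (by norm_num)
  have e₂ := sign_change (-1) 1 (by norm_num) (by norm_num)
  have e₃ := sign_change (-1) (-1) (by norm_num) (by norm_num)
  obtain ⟨h₀, h₁, h₂⟩ : w 0 = 0 ∧ w 1 = 0 ∧ w 2 = 0 :=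
    ⟨by linarith, by linarith, by linarith⟩
  fin_cases i <;> assumption

theorem eq_zero_of_trace_mul_transpose_const {A : Mat3} {k : ℝ}
    (h : ∀ R ∈ SO3, (A * Rᵀ).trace = k) : A = 0 := by
  ext i j
  have := sum_mul_apply_eq_zero_of_trace_mul_transpose_const h
    (permMatrix_mem_SO3 (sign_addRight_fin_three (j - i))) i
  simpa [PEquiv.toMatrix_apply] using this

theorem trace_transpose_mul_le_of_mem_SO3 (F : Mat3) {Q : Mat3} (hQ : Q ∈ SO3) :
    (Fᵀ * Q).trace ≤ ∑ i, ∑ j, |F i j| :=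
  calc (Fᵀ * Q).trace = ∑ j, ∑ i, F i j * Q i j := by simp [trace, mul_apply]
    _ ≤ ∑ j, ∑ i, |F i j| := by
      gcongr with j _ i _
      calc F i j * Q i j ≤ |F i j| * |Q i j| := by rw [← abs_mul]; exact le_abs_self _
        _ ≤ |F i j| := mul_le_of_le_one_right (abs_nonneg _) (abs_apply_le_one_of_mem_SO3 hQ i j)
    _ = ∑ i, ∑ j, |F i j| := Finset.sum_comm

instance : OpensMeasurableSpace Mat3 := inferInstanceAs (OpensMeasurableSpace (Fin 3 → Fin 3 → ℝ))

theorem cF_pos {ν : Measure Mat3} (hν : IsHaarSO3 ν) (F : Mat3) : 0 < cF ν F := by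
  have := hν.1
  have hSO3 : ∀ᵐ Q ∂ν, Q ∈ SO3 := ae_iff.2 hν.2.1
  refine integral_exp_pos (Integrable.of_bound
    (by fun_prop : Continuous fun Q : Mat3 => exp (Fᵀ * Q).trace).aestronglyMeasurable
    (exp (∑ i, ∑ j, |F i j|)) ?_)
  filter_upwards [hSO3] with Q hQ
  rw [norm_of_nonneg (exp_pos _).le, exp_le_exp]
  exact trace_transpose_mul_le_of_mem_SO3 F hQ

def mfgNormalizer {n : ℕ} (ν : Measure Mat3) (Sig : Matrix (Fin n) (Fin n) ℝ)
    (P : Matrix (Fin n) (Fin 3) ℝ) (U S V : Mat3) : ℝ :=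
  cF ν (U * S * Vᵀ) * √((2 * π) ^ n * (sigmaC Sig P S).det)

theorem mfgNormalizer_pos {n : ℕ} {ν : Measure Mat3} (hν : IsHaarSO3 ν)
    {Sig : Matrix (Fin n) (Fin n) ℝ} {P : Matrix (Fin n) (Fin 3) ℝ} {U S V : Mat3}
    (hc : (sigmaC Sig P S).PosDef) : 0 < mfgNormalizer ν Sig P U S V :=
  mul_pos (cF_pos hν _) (sqrt_pos.2 (mul_pos (by positivity) hc.det_pos))

theorem mfg_eq_exp {n : ℕ} {ν : Measure Mat3} (hν : IsHaarSO3 ν) {μ : Fin n → ℝ}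
    {Sig : Matrix (Fin n) (Fin n) ℝ} {P : Matrix (Fin n) (Fin 3) ℝ} {U S V : Mat3}
    (hc : (sigmaC Sig P S).PosDef) (R : Mat3) (x : Fin n → ℝ) :
    mfg ν μ Sig P U S V R x =
      exp (-(1 / 2) * ((x - (μ + P *ᵥ nuR U S V R)) ⬝ᵥ
          (sigmaC Sig P S)⁻¹ *ᵥ (x - (μ + P *ᵥ nuR U S V R))) +
        ((U * S * Vᵀ * Rᵀ).trace - log (mfgNormalizer ν Sig P U S V))) := by
  rw [exp_add, exp_sub, exp_log (mfgNormalizer_pos hν hc), mfg, mfgNormalizer]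
  ring

theorem stmt1_general (n : ℕ) (ν : Measure Mat3) (hν : IsHaarSO3 ν)
    (μ μ' : Fin n → ℝ) (Sig Sig' : Matrix (Fin n) (Fin n) ℝ)
    (P P' : Matrix (Fin n) (Fin 3) ℝ) (U V U' V' : Mat3)
    (S S' : Mat3)
    (hc : (sigmaC Sig P S).PosDef) (hc' : (sigmaC Sig' P' S').PosDef) :
    (∀ R ∈ SO3, ∀ x : Fin n → ℝ,
        mfg ν μ Sig P U S V R x = mfg ν μ' Sig' P' U' S' V' R x) ↔
      (U * S * Vᵀ = U' * S' * V'ᵀ ∧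
        (∀ R ∈ SO3, μ + P.mulVec (nuR U S V R) = μ' + P'.mulVec (nuR U' S' V' R)) ∧
        sigmaC Sig P S = sigmaC Sig' P' S') := by
  refine ⟨fun h => ?_, fun ⟨hF, hm, hC⟩ R hR x => by rw [mfg, mfg, hF, hC, hm R hR]⟩
  simp only [mfg_eq_exp hν hc, mfg_eq_exp hν hc', exp_eq_exp] at h
  have hgauss (R) (hR : R ∈ SO3) :
      sigmaC Sig P S = sigmaC Sig' P' S' ∧
        μ + P *ᵥ nuR U S V R = μ' + P' *ᵥ nuR U' S' V' R :=
    hc.eq_and_eq_of_gaussian_exponent_eq hc' (h R hR)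
  refine ⟨?_, fun R hR => (hgauss R hR).2, (hgauss 1 (mem_SO3_iff.2 (one_mem _))).1⟩
  refine sub_eq_zero.1 <| eq_zero_of_trace_mul_transpose_const
    (k := log (mfgNormalizer ν Sig P U S V) - log (mfgNormalizer ν Sig' P' U' S' V'))
    fun R hR => ?_
  have := h R hR (μ + P *ᵥ nuR U S V R)
  rw [(hgauss R hR).2, (hgauss R hR).1, sub_self, mulVec_zero, dotProduct_zero] at this
  rw [sub_mul, trace_sub]
  linarith

/-- Two MFG densities on `SO(3)×ℝⁿ` coincide everywhere iff
`USVᵀ = ŨS̃Ṽᵀ`, `μ_c(R) = μ̃_c(R)` for all `R ∈ SO(3)`, and `Σ_c = Σ̃_c`. -/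
theorem stmt1 (n : ℕ) (ν : Measure Mat3) (hν : IsHaarSO3 ν)
    (μ μ' : Fin n → ℝ) (Sig Sig' : Matrix (Fin n) (Fin n) ℝ)
    (P P' : Matrix (Fin n) (Fin 3) ℝ) (U V U' V' : Mat3)
    (s s' : Fin 3 → ℝ) (S S' : Mat3)
    (hS : S = Matrix.diagonal s) (hS' : S' = Matrix.diagonal s')
    (hU : U ∈ SO3) (hV : V ∈ SO3) (hU' : U' ∈ SO3) (hV' : V' ∈ SO3)
    (hSig : Sig.IsSymm) (hSig' : Sig'.IsSymm)
    (hc : (sigmaC Sig P S).PosDef) (hc' : (sigmaC Sig' P' S').PosDef) :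
    (∀ R ∈ SO3, ∀ x : Fin n → ℝ,
        mfg ν μ Sig P U S V R x = mfg ν μ' Sig' P' U' S' V' R x) ↔
      (U * S * Vᵀ = U' * S' * V'ᵀ ∧
        (∀ R ∈ SO3, μ + P.mulVec (nuR U S V R) = μ' + P'.mulVec (nuR U' S' V' R)) ∧
        sigmaC Sig P S = sigmaC Sig' P' S') :=
  stmt1_general n ν hν μ μ' Sig Sig' P P' U V U' V' S S' hc hc'

end
end

section
/- Let V, M ∈ SO(3), let S ∈ ℝ^{3×3} be symmetric, and set K = VSVᵀ. For i ∈ {1,2,3} let e_i be the i-th standard basis vector of ℝ³. Then for all i, j ∈ {1,2,3}: tr(M·(Ve_i)∧·K·((Ve_j)∧)ᵀ·Mᵀ) = (tr(S)·I − S)_{ij}. (This identifies the inverse covariance of the ambient Gaussian restricted to the tangent space of SO(3) at M with tr(S)I − S.) -/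
open Matrix MeasureTheory Real

noncomputable section

/-! The hat map turns `(b̂)ᵀ â` into the rank-one correction `(a·b) I − a bᵀ`, so
`tr(â K b̂ᵀ) = (a·b) tr K − bᵀ K a`. Conjugating by `M` leaves the trace unchanged, and for the
columns `a = V eᵢ`, `b = V eⱼ` of the orthogonal `V` one has `a·b = δᵢⱼ`, `bᵀ K a = Sⱼᵢ` and
`tr K = tr S`. -/

section

variable {m n R : Type*} [Fintype m]

theorem trace_mul_mul_transpose_of_transpose_mul_self [DecidableEq m] [CommSemiring R]
    {M : Matrix m m R} (hM : Mᵀ * M = 1) (A : Matrix m m R) : (M * A * Mᵀ).trace = A.trace := by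
  rw [trace_mul_cycle, hM, Matrix.one_mul]

theorem col_dotProduct_mulVec_col [NonUnitalSemiring R] (A : Matrix m n R) (B : Matrix m m R)
    (i j : n) :
    A.col i ⬝ᵥ B *ᵥ A.col j = (Aᵀ * B * A) i j := by
  rw [dotProduct_mulVec, Matrix.mul_apply']
  rfl

end

theorem hat_transpose_mul_hat (a b : Fin 3 → ℝ) :
    (hat b)ᵀ * hat a = (a ⬝ᵥ b) • (1 : Mat3) - vecMulVec a b := by
  ext k l
  fin_cases k <;> fin_cases l <;>
    simp [hat, Matrix.mul_apply, Fin.sum_univ_three, dotProduct, vecMulVec_apply] <;> ring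

theorem trace_hat_mul_mul_hat_transpose (a b : Fin 3 → ℝ) (B : Mat3) :
    (hat a * B * (hat b)ᵀ).trace = (a ⬝ᵥ b) * B.trace - b ⬝ᵥ B *ᵥ a := by
  rw [trace_mul_cycle, hat_transpose_mul_hat, Matrix.sub_mul, trace_sub, Matrix.smul_mul,
    Matrix.one_mul, trace_smul, smul_eq_mul, vecMulVec_mul, trace_vecMulVec,
    dotProduct_comm a (b ᵥ* B), ← dotProduct_mulVec]

/-- `tr(M·(Ve_i)∧·K·((Ve_j)∧)ᵀ·Mᵀ) = (tr(S)·I − S)_{ij}`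
for `V, M ∈ SO(3)`, `S` symmetric, `K = VSVᵀ`. -/
theorem stmt3 (V M S : Mat3) (hV : V ∈ SO3) (hM : M ∈ SO3) (hS : S.IsSymm)
    (K : Mat3) (hK : K = V * S * Vᵀ) :
    ∀ i j : Fin 3,
      (M * hat (V *ᵥ Pi.single i 1) * K * (hat (V *ᵥ Pi.single j 1))ᵀ * Mᵀ).trace
        = (S.trace • (1 : Mat3) - S) i j := by
  intro i j
  have hcols : V.col i ⬝ᵥ V.col j = (1 : Mat3) i j := by
    rw [← one_mulVec (V.col j), col_dotProduct_mulVec_col, Matrix.mul_one, hV.1]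
  have hVK : Vᵀ * K * V = S := by
    rw [hK, ← Matrix.mul_assoc, ← Matrix.mul_assoc, hV.1, Matrix.one_mul, Matrix.mul_assoc,
      hV.1, Matrix.mul_one]
  rw [mulVec_single_one, mulVec_single_one, Matrix.mul_assoc M, Matrix.mul_assoc M,
    trace_mul_mul_transpose_of_transpose_mul_self hM.1, trace_hat_mul_mul_hat_transpose, hcols,
    col_dotProduct_mulVec_col, hVK, hK, trace_mul_mul_transpose_of_transpose_mul_self hV.1,
    Matrix.sub_apply, Matrix.smul_apply, smul_eq_mul, mul_comm, hS.apply]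

end
end

section
/- Let S = diag(s₁,s₂,s₃) with s₁ ≥ s₂ ≥ −s₃ > 0, and let 𝒟₃ = diag(−1,−1,1). Then for every (R,x) ∈ SO(3)×ℝⁿ, the matrix Fisher–Gaussian density with parameters (μ, Σ, P, U, S, V) equals the matrix Fisher–Gaussian density with parameters (μ, Σ̃, P, U, S𝒟₃, V𝒟₃), where Σ̃ = Σ − P(tr(S)I − S)Pᵀ + P(tr(S𝒟₃)I − S𝒟₃)Pᵀ. (V𝒟₃ ∈ SO(3) since det 𝒟₃ = 1.) -/
open Matrix MeasureTheory Real

noncomputable section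

/-! The density depends on `(U, S, V)` only through `F = U S Vᵀ`, the deviation `ν_R` and
`Σ_c`. Multiplying `S` and `V` on the right by a symmetric involution `D` that commutes with
`S` leaves `F` and `ν_R` unchanged (`D` cancels against itself), and the new covariance `Σ̃`
is chosen exactly so that `Σ_c` is unchanged. -/

section RightMultiplication

variable {D S : Mat3}

theorem mul_mul_transpose_mul_right_orthogonal (hD : D * Dᵀ = 1) (U V : Mat3) :
    U * (S * D) * (V * D)ᵀ = U * S * Vᵀ := by
  rw [transpose_mul, Matrix.mul_assoc, Matrix.mul_assoc S, ← Matrix.mul_assoc D, hD,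
    Matrix.one_mul, Matrix.mul_assoc]

theorem nuR_mul_right_involution (hDT : Dᵀ = D) (hDD : D * D = 1) (hSD : S * D = D * S)
    (U V R : Mat3) : nuR U (S * D) (V * D) R = nuR U S V R := by
  have hDSD : D * (S * D) = S := by rw [hSD, ← Matrix.mul_assoc, hDD, Matrix.one_mul]
  have hDDX : ∀ X : Mat3, D * (D * X) = X := fun X => by
    rw [← Matrix.mul_assoc, hDD, Matrix.one_mul]
  unfold nuR
  simp only [transpose_mul, hDT, transpose_transpose, Matrix.mul_assoc, hDSD, hDDX]

end RightMultiplication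

theorem sigmaC_shift {n : ℕ} (Sig : Matrix (Fin n) (Fin n) ℝ) (P : Matrix (Fin n) (Fin 3) ℝ)
    (S S' : Mat3) :
    sigmaC (Sig - P * (S.trace • (1 : Mat3) - S) * Pᵀ
        + P * (S'.trace • (1 : Mat3) - S') * Pᵀ) P S' = sigmaC Sig P S := by
  unfold sigmaC
  abel

theorem mfg_congr {n : ℕ} (ν : Measure Mat3) (μ : Fin n → ℝ)
    {Sig Sig' : Matrix (Fin n) (Fin n) ℝ} (P : Matrix (Fin n) (Fin 3) ℝ) {U S V S' V' : Mat3}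
    (R : Mat3) (x : Fin n → ℝ) (hF : U * S' * V'ᵀ = U * S * Vᵀ)
    (hnu : nuR U S' V' R = nuR U S V R) (hSig : sigmaC Sig' P S' = sigmaC Sig P S) :
    mfg ν μ Sig' P U S' V' R x = mfg ν μ Sig P U S V R x := by
  unfold mfg
  rw [hF, hnu, hSig]

theorem stmt5_general (n : ℕ) (ν : Measure Mat3)
    (μ : Fin n → ℝ) (Sig : Matrix (Fin n) (Fin n) ℝ) (P : Matrix (Fin n) (Fin 3) ℝ)
    (U V : Mat3)
    (s₁ s₂ s₃ : ℝ)
    (S : Mat3) (hS : S = Matrix.diagonal ![s₁, s₂, s₃])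
    (D₃ : Mat3) (hD₃ : D₃ = Matrix.diagonal ![-1, -1, 1])
    (Sig' : Matrix (Fin n) (Fin n) ℝ)
    (hSig'def : Sig' = Sig - P * (S.trace • (1 : Mat3) - S) * Pᵀ
        + P * ((S * D₃).trace • (1 : Mat3) - S * D₃) * Pᵀ) :
    ∀ R ∈ SO3, ∀ x : Fin n → ℝ,
      mfg ν μ Sig P U S V R x = mfg ν μ Sig' P U (S * D₃) (V * D₃) R x := by
  intro R _ x
  have hDT : D₃ᵀ = D₃ := by rw [hD₃, diagonal_transpose]
  have hDD : D₃ * D₃ = 1 := by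
    rw [hD₃, diagonal_mul_diagonal, ← diagonal_one]
    congr 1
    ext i
    fin_cases i <;> norm_num
  have hSD : S * D₃ = D₃ * S := by rw [hS, hD₃]; exact commute_diagonal _ _
  subst hSig'def
  exact (mfg_congr ν μ P R x (mul_mul_transpose_mul_right_orthogonal (by rw [hDT, hDD]) U V)
    (nuR_mul_right_involution hDT hDD hSD U V R) (sigmaC_shift Sig P S _)).symm

/-- With `S = diag(s₁,s₂,s₃)`, `s₁ ≥ s₂ ≥ −s₃ > 0`, and
`𝒟₃ = diag(−1,−1,1)`, the MFG density with parameters `(μ, Σ, P, U, S, V)` equals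
the MFG density with parameters `(μ, Σ̃, P, U, S𝒟₃, V𝒟₃)`, where
`Σ̃ = Σ − P(tr(S)I − S)Pᵀ + P(tr(S𝒟₃)I − S𝒟₃)Pᵀ`. -/
theorem stmt5 (n : ℕ) (ν : Measure Mat3) (hν : IsHaarSO3 ν)
    (μ : Fin n → ℝ) (Sig : Matrix (Fin n) (Fin n) ℝ) (P : Matrix (Fin n) (Fin 3) ℝ)
    (U V : Mat3) (hU : U ∈ SO3) (hV : V ∈ SO3) (hSig : Sig.IsSymm)
    (s₁ s₂ s₃ : ℝ) (h12 : s₁ ≥ s₂) (h23 : s₂ ≥ -s₃) (h3 : -s₃ > 0)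
    (S : Mat3) (hS : S = Matrix.diagonal ![s₁, s₂, s₃])
    (D₃ : Mat3) (hD₃ : D₃ = Matrix.diagonal ![-1, -1, 1])
    (hc : (sigmaC Sig P S).PosDef)
    (Sig' : Matrix (Fin n) (Fin n) ℝ)
    (hSig'def : Sig' = Sig - P * (S.trace • (1 : Mat3) - S) * Pᵀ
        + P * ((S * D₃).trace • (1 : Mat3) - S * D₃) * Pᵀ) :
    ∀ R ∈ SO3, ∀ x : Fin n → ℝ,
      mfg ν μ Sig P U S V R x = mfg ν μ Sig' P U (S * D₃) (V * D₃) R x :=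
  stmt5_general n ν μ Sig P U V s₁ s₂ s₃ S hS D₃ hD₃ Sig' hSig'def

end
end

section
/- If S ∈ ℝ^{3×3} is diagonal, then the matrix ∫_{SO(3)} Q·etr(SQᵀ) dQ is diagonal; i.e., for all i ≠ j, ∫_{SO(3)} Q_{ij}·etr(SQᵀ) dQ = 0. Consequently, ∫_{SO(3)} (QS − SQᵀ)∨ · etr(SQᵀ) dQ = 0. -/
open Matrix MeasureTheory Real

noncomputable section

/-! Conjugation `Q ↦ DQD` by the half-turn `D = diag(±1)` about a coordinate axis preserves the
bi-invariant measure and, for diagonal `S`, the weight `etr(SQᵀ)`, while it flips the sign of every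
off-diagonal entry `Q_ij` with `i` or `j` on that axis. Both integrands are therefore odd under some
such conjugation and integrate to zero. Since the conjugation is a measurable involution, the change
of variables needs no integrability. -/

theorem integral_eq_zero_of_involutive_of_neg {α E : Type*} [MeasurableSpace α]
    [NormedAddCommGroup E] [NormedSpace ℝ E] {μ : Measure α} {g : α → α}
    (hg : Measurable g) (hinv : Function.Involutive g) (hμ : μ.map g = μ) {f : α → E}
    (hf : ∀ x, f (g x) = -f x) : ∫ x, f x ∂μ = 0 := by
  have hpres : MeasurePreserving (MeasurableEquiv.ofInvolutive g hinv hg) μ μ := ⟨hg, hμ⟩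
  have hcomp := hpres.integral_comp' f
  simp only [MeasurableEquiv.ofInvolutive_apply, hf, integral_neg] at hcomp
  linear_combination (norm := module) (-1 / 2 : ℝ) • hcomp

instance : BorelSpace Mat3 := inferInstanceAs (BorelSpace (Fin 3 → Fin 3 → ℝ))

theorem IsHaarSO3.map_mul_mul {ν : Measure Mat3} (hν : IsHaarSO3 ν) {A B : Mat3}
    (hA : A ∈ SO3) (hB : B ∈ SO3) : ν.map (fun Q => A * Q * B) = ν := by
  have hcomp : (fun Q : Mat3 => A * Q * B) = (· * B) ∘ (A * ·) := rfl
  rw [hcomp, ← Measure.map_map (by fun_prop) (by fun_prop), hν.2.2.1 A hA, hν.2.2.2 B hB]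

def halfTurn (i : Fin 3) : Mat3 := diagonal fun k => if k = i then 1 else -1

theorem halfTurn_transpose (i : Fin 3) : (halfTurn i)ᵀ = halfTurn i := diagonal_transpose _

theorem halfTurn_mul_self (i : Fin 3) : halfTurn i * halfTurn i = 1 := by
  rw [halfTurn, diagonal_mul_diagonal, ← diagonal_one]
  congr 1
  ext k
  split_ifs <;> norm_num

theorem halfTurn_mem_SO3 (i : Fin 3) : halfTurn i ∈ SO3 := by
  refine ⟨by rw [halfTurn_transpose, halfTurn_mul_self], ?_⟩
  rw [halfTurn, det_diagonal]
  fin_cases i <;> simp [Fin.prod_univ_three]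

theorem halfTurn_mul_diagonal_mul_halfTurn (i : Fin 3) (s : Fin 3 → ℝ) :
    halfTurn i * diagonal s * halfTurn i = diagonal s := by
  rw [halfTurn, diagonal_mul_diagonal, diagonal_mul_diagonal]
  congr 1
  ext k
  split_ifs <;> ring

theorem halfTurn_conj_apply_of_ne (A : Mat3) {a b : Fin 3} (hab : a ≠ b) :
    (halfTurn a * A * halfTurn a) a b = -A a b := by
  simp [halfTurn, mul_diagonal, diagonal_mul, hab.symm]

theorem trace_diagonal_mul_transpose_halfTurn_conj (i : Fin 3) (s : Fin 3 → ℝ) (Q : Mat3) :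
    (diagonal s * (halfTurn i * Q * halfTurn i)ᵀ).trace = (diagonal s * Qᵀ).trace := by
  rw [transpose_mul, transpose_mul, halfTurn_transpose, ← Matrix.mul_assoc, ← Matrix.mul_assoc,
    trace_mul_cycle, ← Matrix.mul_assoc, halfTurn_mul_diagonal_mul_halfTurn]

theorem halfTurn_conj_mul_diagonal_sub (i : Fin 3) (s : Fin 3 → ℝ) (Q : Mat3) :
    halfTurn i * Q * halfTurn i * diagonal s - diagonal s * (halfTurn i * Q * halfTurn i)ᵀ
      = halfTurn i * (Q * diagonal s - diagonal s * Qᵀ) * halfTurn i := by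
  have hcomm : diagonal s * halfTurn i = halfTurn i * diagonal s := by
    simp only [halfTurn, diagonal_mul_diagonal, mul_comm]
  simp only [transpose_mul, halfTurn_transpose, Matrix.mul_sub, Matrix.sub_mul, Matrix.mul_assoc, hcomm]
  simp only [← Matrix.mul_assoc, hcomm]

theorem vee_apply (A : Mat3) (i : Fin 3) : vee A i = A (i + 2) (i + 1) := by
  fin_cases i <;> rfl

theorem integral_eq_zero_of_halfTurn_odd {ν : Measure Mat3} (hν : IsHaarSO3 ν) (k : Fin 3)
    {f : Mat3 → ℝ} (hf : ∀ Q, f (halfTurn k * Q * halfTurn k) = -f Q) : ∫ Q, f Q ∂ν = 0 := by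
  refine integral_eq_zero_of_involutive_of_neg (by fun_prop) (fun Q => ?_)
    (hν.map_mul_mul (halfTurn_mem_SO3 k) (halfTurn_mem_SO3 k)) hf
  simp only [← Matrix.mul_assoc, halfTurn_mul_self, Matrix.one_mul]
  rw [Matrix.mul_assoc, halfTurn_mul_self, Matrix.mul_one]

/-- For diagonal `S`, the matrix `∫_{SO(3)} Q·etr(SQᵀ) dQ` is diagonal,
and consequently `∫_{SO(3)} (QS − SQᵀ)∨ · etr(SQᵀ) dQ = 0`. -/
theorem stmt6 (ν : Measure Mat3) (hν : IsHaarSO3 ν)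
    (s : Fin 3 → ℝ) (S : Mat3) (hS : S = Matrix.diagonal s) :
    (∀ i j : Fin 3, i ≠ j → ∫ Q, Q i j * Real.exp ((S * Qᵀ).trace) ∂ν = 0) ∧
    (∀ i : Fin 3, ∫ Q, vee (Q * S - S * Qᵀ) i * Real.exp ((S * Qᵀ).trace) ∂ν = 0) := by
  subst hS
  refine ⟨fun i j hij => integral_eq_zero_of_halfTurn_odd hν i fun Q => ?_,
    fun i => integral_eq_zero_of_halfTurn_odd hν (i + 2) fun Q => ?_⟩
  · rw [trace_diagonal_mul_transpose_halfTurn_conj, halfTurn_conj_apply_of_ne Q hij, neg_mul]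
  · rw [trace_diagonal_mul_transpose_halfTurn_conj, halfTurn_conj_mul_diagonal_sub, vee_apply,
      vee_apply, halfTurn_conj_apply_of_ne _ (by fin_cases i <;> decide), neg_mul]

end
end

section
/- Let S = diag(s₁,s₂,s₃) and let E[·] denote expectation with respect to the matrix Fisher density etr(SQᵀ)/c(S) on SO(3). Define ν_Q = (QS − SQᵀ)∨. Then the 3×3 matrix E[ν_Q ν_Qᵀ] is diagonal, and for each permutation {i,j,k} = {1,2,3} its i-th diagonal entry equals (s_j² + s_k²)·E[Q_{jk}²] − 2 s_j s_k·E[Q_{jk} Q_{kj}]; in particular E[Q_{jk}²] = E[Q_{kj}²]. -/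
open Matrix MeasureTheory Real

noncomputable section

instance : SecondCountableTopology Mat3 :=
  inferInstanceAs (SecondCountableTopology (Fin 3 → Fin 3 → ℝ))

open scoped ENNReal

@[fun_prop]
lemma continuous_vee : Continuous vee :=
  continuous_pi fun i => by fin_cases i <;> simp [vee] <;> fun_prop

lemma vee_mul_diagonal_sub_diagonal_mul_transpose (s : Fin 3 → ℝ) (Q : Mat3) :
    vee (Q * diagonal s - diagonal s * Qᵀ) =
      ![Q 2 1 * s 1 - s 2 * Q 1 2, Q 0 2 * s 2 - s 0 * Q 2 0, Q 1 0 * s 0 - s 1 * Q 0 1] := by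
  funext i
  fin_cases i <;> simp [vee, mul_diagonal, diagonal_mul]

lemma vee_mul_diagonal_sub_apply_mul_self {s : Fin 3 → ℝ} {Q : Mat3} {i j k : Fin 3}
    (hij : i ≠ j) (hjk : j ≠ k) (hik : i ≠ k) :
    vee (Q * diagonal s - diagonal s * Qᵀ) i * vee (Q * diagonal s - diagonal s * Qᵀ) i =
      s k ^ 2 * (Q j k * Q j k) + s j ^ 2 * (Q k j * Q k j) - 2 * s j * s k * (Q j k * Q k j) := by
  rw [vee_mul_diagonal_sub_diagonal_mul_transpose]
  fin_cases i <;> fin_cases j <;> fin_cases k <;> simp_all <;> ring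

lemma trace_diagonal_mul_transpose {n R : Type*} [Fintype n] [DecidableEq n] [CommSemiring R]
    (s : n → R) (Q : Matrix n n R) : (diagonal s * Qᵀ).trace = ∑ i, s i * Q i i := by
  simp [trace, diagonal_mul]

lemma transpose_mem_SO3 {Q : Mat3} (hQ : Q ∈ SO3) : Qᵀ ∈ SO3 :=
  ⟨by simpa using mul_eq_one_comm.mpr hQ.1, by simpa using hQ.2⟩

lemma norm_apply_le_one_of_mem_SO3 {Q : Mat3} (hQ : Q ∈ SO3) (i j : Fin 3) : ‖Q i j‖ ≤ 1 := by
  refine entry_norm_bound_of_unitary ?_ i j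
  rw [mem_unitaryGroup_iff', star_eq_conjTranspose, conjTranspose_eq_transpose_of_trivial]
  exact hQ.1

lemma trace_diagonal_mul_transpose_le_of_mem_SO3 (s : Fin 3 → ℝ) {Q : Mat3} (hQ : Q ∈ SO3) :
    (diagonal s * Qᵀ).trace ≤ ∑ i, |s i| := by
  rw [trace_diagonal_mul_transpose]
  refine Finset.sum_le_sum fun i _ => ?_
  calc s i * Q i i ≤ |s i| * |Q i i| := (le_abs_self _).trans (abs_mul _ _).le
    _ ≤ |s i| * 1 := mul_le_mul_of_nonneg_left (norm_apply_le_one_of_mem_SO3 hQ i i) (abs_nonneg _)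
    _ = |s i| := mul_one _

/-- The rotation by `π` about the `a`-th coordinate axis. -/
def rotPi (a : Fin 3) : Mat3 := diagonal fun i => if i = a then 1 else -1

lemma rotPi_mem_SO3 (a : Fin 3) : rotPi a ∈ SO3 := by
  refine ⟨?_, ?_⟩
  · rw [rotPi, diagonal_transpose, diagonal_mul_diagonal, ← diagonal_one]
    congr 1
    funext i
    split_ifs <;> norm_num
  · rw [rotPi, det_diagonal, Fin.prod_univ_three]
    fin_cases a <;> simp [Fin.ext_iff]

lemma rotPi_conj_apply (a : Fin 3) (Q : Mat3) (i j : Fin 3) :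
    (rotPi a * Q * rotPi a) i j =
      (if i = a then 1 else -1) * Q i j * (if j = a then 1 else -1) := by
  simp [rotPi, diagonal_mul, mul_diagonal]

lemma vee_rotPi_conj (s : Fin 3 → ℝ) (a : Fin 3) (Q : Mat3) (i : Fin 3) :
    vee (rotPi a * Q * rotPi a * diagonal s - diagonal s * (rotPi a * Q * rotPi a)ᵀ) i =
      (if i = a then 1 else -1) * vee (Q * diagonal s - diagonal s * Qᵀ) i := by
  simp only [vee_mul_diagonal_sub_diagonal_mul_transpose, rotPi_conj_apply]
  fin_cases a <;> fin_cases i <;> simp <;> ring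

lemma exp_trace_diagonal_mul_transpose_rotPi_conj (s : Fin 3 → ℝ) (a : Fin 3) (Q : Mat3) :
    exp ((diagonal s * (rotPi a * Q * rotPi a)ᵀ).trace) = exp ((diagonal s * Qᵀ).trace) := by
  simp only [trace_diagonal_mul_transpose, rotPi_conj_apply]
  congr 1
  refine Finset.sum_congr rfl fun i _ => ?_
  split_ifs <;> ring

lemma integral_mul_comp_eq_of_map_eq {α : Type*} [MeasurableSpace α] {μ : Measure α}
    {T : α → α} (hT : Measurable T) (hμ : μ.map T = μ) {f w : α → ℝ}
    (hfw : AEStronglyMeasurable (fun x => f x * w x) μ) (hw : ∀ x, w (T x) = w x) :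
    ∫ x, f (T x) * w x ∂μ = ∫ x, f x * w x ∂μ := by
  calc ∫ x, f (T x) * w x ∂μ = ∫ x, f (T x) * w (T x) ∂μ := by simp only [hw]
    _ = ∫ x, f x * w x ∂(μ.map T) := (integral_map hT.aemeasurable (hμ.symm ▸ hfw)).symm
    _ = ∫ x, f x * w x ∂μ := by rw [hμ]

namespace IsHaarSO3

variable {ν : Measure Mat3}

lemma ae_mem (hν : IsHaarSO3 ν) : ∀ᵐ Q ∂ν, Q ∈ SO3 :=
  ae_iff.mpr hν.2.1

lemma lintegral_comp_mul_right (hν : IsHaarSO3 ν) {A : Mat3} (hA : A ∈ SO3)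
    {f : Mat3 → ℝ≥0∞} (hf : Measurable f) : ∫⁻ Q, f (Q * A) ∂ν = ∫⁻ Q, f Q ∂ν := by
  conv_rhs => rw [← hν.2.2.2 A hA]
  rw [lintegral_map hf (by fun_prop)]

lemma map_mul_mul_s8 (hν : IsHaarSO3 ν) {A B : Mat3} (hA : A ∈ SO3) (hB : B ∈ SO3) :
    ν.map (fun Q => A * Q * B) = ν := by
  change ν.map ((fun Q => Q * B) ∘ (fun Q => A * Q)) = ν
  rw [← Measure.map_map (by fun_prop : Measurable fun Q : Mat3 => Q * B) (by fun_prop),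
    hν.2.2.1 A hA, hν.2.2.2 B hB]

/-- Right invariance alone makes `ν` invariant under `Q ↦ Q⁻¹ = Qᵀ`: integrate `f (x * yᵀ)` over
`x` and `y` in either order. -/
lemma map_transpose (hν : IsHaarSO3 ν) : ν.map transpose = ν := by
  have := hν.1
  refine Measure.ext_of_lintegral _ fun f hf => ?_
  rw [lintegral_map hf (by fun_prop)]
  have inner_left : ∀ᵐ x ∂ν, ∫⁻ y, f (x * yᵀ) ∂ν = ∫⁻ Q, f Qᵀ ∂ν := by
    filter_upwards [hν.ae_mem] with x hx
    simpa [transpose_mul] using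
      hν.lintegral_comp_mul_right (transpose_mem_SO3 hx) (hf.comp (by fun_prop : Measurable
        (transpose : Mat3 → Mat3)))
  have inner_right : ∀ᵐ y ∂ν, ∫⁻ x, f (x * yᵀ) ∂ν = ∫⁻ Q, f Q ∂ν := by
    filter_upwards [hν.ae_mem] with y hy
    exact hν.lintegral_comp_mul_right (transpose_mem_SO3 hy) hf
  calc ∫⁻ Q, f Qᵀ ∂ν = ∫⁻ x, ∫⁻ y, f (x * yᵀ) ∂ν ∂ν := by
        rw [lintegral_congr_ae inner_left, lintegral_const, measure_univ, mul_one]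
    _ = ∫⁻ y, ∫⁻ x, f (x * yᵀ) ∂ν ∂ν :=
        lintegral_lintegral_swap (hf.comp (by fun_prop)).aemeasurable
    _ = ∫⁻ Q, f Q ∂ν := by
        rw [lintegral_congr_ae inner_right, lintegral_const, measure_univ, mul_one]

lemma integrable_apply_mul_apply_mul_exp_trace (hν : IsHaarSO3 ν) (s : Fin 3 → ℝ)
    (a b c d : Fin 3) :
    Integrable (fun Q => Q a b * Q c d * exp ((diagonal s * Qᵀ).trace)) ν := by
  have := hν.1
  refine .of_bound (by fun_prop) (exp (∑ i, |s i|)) ?_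
  filter_upwards [hν.ae_mem] with Q hQ
  rw [norm_mul, norm_mul, norm_of_nonneg (exp_pos _).le]
  calc ‖Q a b‖ * ‖Q c d‖ * exp ((diagonal s * Qᵀ).trace) ≤ 1 * 1 * exp (∑ i, |s i|) := by
        gcongr
        · exact norm_apply_le_one_of_mem_SO3 hQ a b
        · exact norm_apply_le_one_of_mem_SO3 hQ c d
        · exact trace_diagonal_mul_transpose_le_of_mem_SO3 s hQ
    _ = exp (∑ i, |s i|) := by ring

lemma integral_vee_mul_vee_mul_exp_trace_eq_zero (hν : IsHaarSO3 ν) (s : Fin 3 → ℝ)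
    {a b : Fin 3} (hab : a ≠ b) :
    ∫ Q, vee (Q * diagonal s - diagonal s * Qᵀ) a * vee (Q * diagonal s - diagonal s * Qᵀ) b *
      exp ((diagonal s * Qᵀ).trace) ∂ν = 0 := by
  have hsym := integral_mul_comp_eq_of_map_eq (by fun_prop)
    (hν.map_mul_mul_s8 (rotPi_mem_SO3 a) (rotPi_mem_SO3 a))
    (f := fun Q => vee (Q * diagonal s - diagonal s * Qᵀ) a *
      vee (Q * diagonal s - diagonal s * Qᵀ) b)
    (w := fun Q => exp ((diagonal s * Qᵀ).trace))
    (Continuous.aestronglyMeasurable (by fun_prop))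
    (exp_trace_diagonal_mul_transpose_rotPi_conj s a)
  simp only [vee_rotPi_conj, if_neg hab.symm, ite_true, one_mul, mul_neg, neg_mul,
    integral_neg] at hsym
  linarith

lemma integral_sq_apply_mul_exp_trace_comm (hν : IsHaarSO3 ν) (s : Fin 3 → ℝ) (j k : Fin 3) :
    ∫ Q, Q j k ^ 2 * exp ((diagonal s * Qᵀ).trace) ∂ν =
      ∫ Q, Q k j ^ 2 * exp ((diagonal s * Qᵀ).trace) ∂ν := by
  refine (integral_mul_comp_eq_of_map_eq (by fun_prop) hν.map_transpose
    (f := fun Q => Q j k ^ 2) (w := fun Q => exp ((diagonal s * Qᵀ).trace))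
    (Continuous.aestronglyMeasurable (by fun_prop)) fun Q => ?_).symm
  simp only [trace_diagonal_mul_transpose, transpose_apply]

lemma integral_vee_mul_self_mul_exp_trace (hν : IsHaarSO3 ν) (s : Fin 3 → ℝ) {i j k : Fin 3}
    (hij : i ≠ j) (hjk : j ≠ k) (hik : i ≠ k) :
    ∫ Q, vee (Q * diagonal s - diagonal s * Qᵀ) i * vee (Q * diagonal s - diagonal s * Qᵀ) i *
      exp ((diagonal s * Qᵀ).trace) ∂ν =
      (s j ^ 2 + s k ^ 2) * ∫ Q, Q j k ^ 2 * exp ((diagonal s * Qᵀ).trace) ∂ν -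
        2 * s j * s k * ∫ Q, Q j k * Q k j * exp ((diagonal s * Qᵀ).trace) ∂ν := by
  have hI := hν.integrable_apply_mul_apply_mul_exp_trace s
  have expand : ∀ Q : Mat3, vee (Q * diagonal s - diagonal s * Qᵀ) i *
      vee (Q * diagonal s - diagonal s * Qᵀ) i * exp ((diagonal s * Qᵀ).trace) =
      s k ^ 2 * (Q j k * Q j k * exp ((diagonal s * Qᵀ).trace)) +
        s j ^ 2 * (Q k j * Q k j * exp ((diagonal s * Qᵀ).trace)) -
        2 * s j * s k * (Q j k * Q k j * exp ((diagonal s * Qᵀ).trace)) := fun Q => by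
    rw [vee_mul_diagonal_sub_apply_mul_self hij hjk hik]
    ring
  have comm := hν.integral_sq_apply_mul_exp_trace_comm s k j
  simp only [sq] at comm ⊢
  rw [integral_congr_ae (.of_eq (funext expand)), integral_sub, integral_add,
    integral_const_mul, integral_const_mul, integral_const_mul, comm]
  · ring
  · exact (hI j k j k).const_mul _
  · exact (hI k j k j).const_mul _
  · exact ((hI j k j k).const_mul _).add ((hI k j k j).const_mul _)
  · exact (hI j k k j).const_mul _

end IsHaarSO3

/-- Under the matrix Fisher density with diagonal parameter
`S = diag(s₁,s₂,s₃)`, the matrix `E[ν_Q ν_Qᵀ]`, `ν_Q = (QS − SQᵀ)∨`, is diagonal,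
with `i`-th diagonal entry `(s_j² + s_k²)E[Q_{jk}²] − 2 s_j s_k E[Q_{jk}Q_{kj}]`
for `{i,j,k} = {1,2,3}`; in particular `E[Q_{jk}²] = E[Q_{kj}²]`. -/
theorem stmt8 (ν : Measure Mat3) (hν : IsHaarSO3 ν)
    (s : Fin 3 → ℝ) (S : Mat3) (hS : S = Matrix.diagonal s)
    (E : (Mat3 → ℝ) → ℝ)
    (hE : ∀ f : Mat3 → ℝ,
      E f = (∫ Q, f Q * Real.exp ((S * Qᵀ).trace) ∂ν) /
        (∫ Q, Real.exp ((S * Qᵀ).trace) ∂ν)) :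
    (∀ a b : Fin 3, a ≠ b →
      E (fun Q => vee (Q * S - S * Qᵀ) a * vee (Q * S - S * Qᵀ) b) = 0) ∧
    (∀ i j k : Fin 3, i ≠ j → j ≠ k → i ≠ k →
      E (fun Q => vee (Q * S - S * Qᵀ) i * vee (Q * S - S * Qᵀ) i)
        = (s j ^ 2 + s k ^ 2) * E (fun Q => Q j k ^ 2)
          - 2 * s j * s k * E (fun Q => Q j k * Q k j)) ∧
    (∀ j k : Fin 3, j ≠ k → E (fun Q => Q j k ^ 2) = E (fun Q => Q k j ^ 2)) := by
  subst hS
  simp only [hE]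
  refine ⟨fun a b hab => ?_, fun i j k hij hjk hik => ?_, fun j k _ => ?_⟩
  · rw [hν.integral_vee_mul_vee_mul_exp_trace_eq_zero s hab, zero_div]
  · rw [hν.integral_vee_mul_self_mul_exp_trace s hij hjk hik]
    ring
  · rw [hν.integral_sq_apply_mul_exp_trace_comm s j k]
end
end

section
/- Let S ∈ ℝ^{3×3} be diagonal. Then for all j ∈ {1,2,3} and all i ≠ k in {1,2,3}: ∫_{SO(3)} Q_{ij} Q_{kj} · etr(SQᵀ) dQ = 0 and ∫_{SO(3)} Q_{ji} Q_{jk} · etr(SQᵀ) dQ = 0; i.e., under the matrix Fisher density with diagonal parameter S, products of two distinct entries of Q lying in the same column or in the same row have zero expectation. -/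
open Matrix MeasureTheory Real

noncomputable section

theorem integral_eq_zero_of_measurePreserving_of_comp_eq_neg {α E : Type*} [MeasurableSpace α]
    [NormedAddCommGroup E] [NormedSpace ℝ E] {μ : Measure α} {g : α → α}
    (hg : MeasurePreserving g μ μ) {f : α → E} (hf : AEStronglyMeasurable f μ)
    (hfg : ∀ x, f (g x) = -f x) : ∫ x, f x ∂μ = 0 := by
  have h := integral_map hg.aemeasurable (hg.map_eq.symm ▸ hf)
  simp only [hg.map_eq, hfg, integral_neg] at h
  have h2 : (2 : ℝ) • ∫ x, f x ∂μ = 0 := by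
    rw [two_smul]
    nth_rewrite 1 [h]
    exact neg_add_cancel _
  exact (smul_eq_zero.mp h2).resolve_left two_ne_zero

theorem Matrix.trace_diagonal_mul_transpose_conj_diagonal {n R : Type*} [Fintype n]
    [DecidableEq n] [CommRing R] (s : n → R) {d : n → R} (hd : ∀ i, d i * d i = 1)
    (Q : Matrix n n R) :
    (diagonal s * (diagonal d * Q * diagonal d)ᵀ).trace = (diagonal s * Qᵀ).trace := by
  simp only [trace, diag, diagonal_mul, mul_diagonal, transpose_apply]
  refine Finset.sum_congr rfl fun i _ => ?_
  linear_combination s i * Q i i * hd i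

theorem mul_self_eq_one_of_diagonal_mem_SO3 {d : Fin 3 → ℝ} (hd : diagonal d ∈ SO3) (i : Fin 3) :
    d i * d i = 1 := by
  simpa using congrFun (congrFun hd.1 i) i

theorem IsHaarSO3.measurePreserving_mul_mul {ν : Measure Mat3} (hν : IsHaarSO3 ν) {A B : Mat3}
    (hA : A ∈ SO3) (hB : B ∈ SO3) : MeasurePreserving (fun Q => A * Q * B) ν ν :=
  (MeasurePreserving.mk (Continuous.measurable (by fun_prop)) (hν.2.2.2 B hB)).comp
    (MeasurePreserving.mk (Continuous.measurable (by fun_prop)) (hν.2.2.1 A hA))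

theorem IsHaarSO3.integral_entry_mul_entry_mul_exp_trace_eq_zero {ν : Measure Mat3}
    (hν : IsHaarSO3 ν) (s : Fin 3 → ℝ) {d : Fin 3 → ℝ} (hd : diagonal d ∈ SO3)
    {a b c e : Fin 3} (hsign : d a * d b * (d c * d e) = -1) :
    ∫ Q, Q a b * Q c e * Real.exp ((diagonal s * Qᵀ).trace) ∂ν = 0 := by
  refine integral_eq_zero_of_measurePreserving_of_comp_eq_neg
    (hν.measurePreserving_mul_mul hd hd) (Continuous.aestronglyMeasurable (by fun_prop))
    fun Q => ?_
  have entry (p q : Fin 3) : (diagonal d * Q * diagonal d) p q = d p * Q p q * d q := by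
    simp [diagonal_mul, mul_diagonal]
  rw [trace_diagonal_mul_transpose_conj_diagonal s (mul_self_eq_one_of_diagonal_mem_SO3 hd),
    entry, entry]
  linear_combination Q a b * Q c e * Real.exp ((diagonal s * Qᵀ).trace) * hsign

def axisFlipSigns (k : Fin 3) : Fin 3 → ℝ := fun m => if m = k then 1 else -1

theorem axisFlipSigns_mul_self (k m : Fin 3) : axisFlipSigns k m * axisFlipSigns k m = 1 := by
  unfold axisFlipSigns
  split_ifs <;> norm_num

theorem diagonal_axisFlipSigns_mem_SO3 (k : Fin 3) : diagonal (axisFlipSigns k) ∈ SO3 := by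
  constructor
  · rw [diagonal_transpose, diagonal_mul_diagonal, funext (axisFlipSigns_mul_self k),
      diagonal_one]
  · fin_cases k <;> simp [axisFlipSigns, det_diagonal, Fin.prod_univ_three]

theorem axisFlipSigns_mul_of_ne {i k : Fin 3} (hik : i ≠ k) :
    axisFlipSigns k i * axisFlipSigns k k = -1 := by
  simp [axisFlipSigns, hik]

/-- For diagonal `S`, products of two distinct entries of `Q` lying in
the same column or in the same row have zero integral against `etr(SQᵀ)` over `SO(3)`. -/
theorem stmt9 (ν : Measure Mat3) (hν : IsHaarSO3 ν)
    (s : Fin 3 → ℝ) (S : Mat3) (hS : S = Matrix.diagonal s) :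
    ∀ j i k : Fin 3, i ≠ k →
      (∫ Q, Q i j * Q k j * Real.exp ((S * Qᵀ).trace) ∂ν = 0) ∧
      (∫ Q, Q j i * Q j k * Real.exp ((S * Qᵀ).trace) ∂ν = 0) := by
  subst hS
  intro j i k hik
  have hD := diagonal_axisFlipSigns_mem_SO3 k
  have hik' := axisFlipSigns_mul_of_ne hik
  have hjj := axisFlipSigns_mul_self k j
  constructor
  · exact hν.integral_entry_mul_entry_mul_exp_trace_eq_zero s hD
      (by linear_combination (axisFlipSigns k j * axisFlipSigns k j) * hik' - hjj)
  · exact hν.integral_entry_mul_entry_mul_exp_trace_eq_zero s hD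
      (by linear_combination (axisFlipSigns k j * axisFlipSigns k j) * hik' - hjj)

end
end

section
/- Let (R_i, x_i) ∈ SO(3)×ℝⁿ for i = 1,…,N be samples, let U, V ∈ SO(3) and diagonal S ∈ ℝ^{3×3} be given, and set ν_i = (UᵀR_iV·S − S·VᵀR_iᵀU)∨. Let Ē denote the sample mean, and define c̄ov(x,x) = Ē[xxᵀ] − Ē[x]Ē[x]ᵀ, c̄ov(x,ν) = Ē[xνᵀ] − Ē[x]Ē[ν]ᵀ, c̄ov(ν,ν) = Ē[ννᵀ] − Ē[ν]Ē[ν]ᵀ, and assume c̄ov(ν,ν) is invertible. Define P = c̄ov(x,ν)·c̄ov(ν,ν)⁻¹, μ = Ē[x] − P·Ē[ν], and Σ = c̄ov(x,x) − P·c̄ov(x,ν)ᵀ + P(tr(S)I − S)Pᵀ. Then these values satisfy the first-order optimality conditions of the conditional log-likelihood: (i) Ē[x − μ − Pν] = 0; (ii) Ē[(x − μ)νᵀ] = P·Ē[ννᵀ]; (iii) Σ − P(tr(S)I − S)Pᵀ = Ē[(x − μ − Pν)(x − μ − Pν)ᵀ]. -/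
open Matrix MeasureTheory Real

noncomputable section

/-!
With `w = x - Pν`, the choice of `μ` makes the residual `x - μ - Pν` the centred sample `w - w̄`,
so its mean vanishes and its second moment is `c̄ov(w,w)`. Expanding this bilinearly and using the
normal equation `P·c̄ov(ν,ν) = c̄ov(x,ν)` collapses it to `c̄ov(x,x) - P·c̄ov(x,ν)ᵀ`, which is (iii);
(ii) is the same normal equation with `P·Ē[ν]Ē[ν]ᵀ` added to both sides.
-/

section SampleStatistics

variable {N : ℕ}

def sampleMean {E : Type*} [AddCommGroup E] [Module ℝ E] (z : Fin N → E) : E :=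
  (N : ℝ)⁻¹ • ∑ i, z i

def sampleCov {m n : Type*} (u : Fin N → m → ℝ) (v : Fin N → n → ℝ) : Matrix m n ℝ :=
  sampleMean (fun i => vecMulVec (u i) (v i)) - vecMulVec (sampleMean u) (sampleMean v)

variable {E F : Type*} [AddCommGroup E] [Module ℝ E] [AddCommGroup F] [Module ℝ F]

theorem LinearMap.map_sampleMean (f : E →ₗ[ℝ] F) (z : Fin N → E) :
    f (sampleMean z) = sampleMean (fun i => f (z i)) := by
  simp only [sampleMean, map_smul, map_sum]

theorem sampleMean_sub (u v : Fin N → E) :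
    sampleMean (fun i => u i - v i) = sampleMean u - sampleMean v := by
  simp only [sampleMean, Finset.sum_sub_distrib, smul_sub]

theorem sampleMean_const (hN : N ≠ 0) (c : E) : sampleMean (fun _ : Fin N => c) = c := by
  rw [sampleMean, Finset.sum_const, Finset.card_univ, Fintype.card_fin, ← Nat.cast_smul_eq_nsmul ℝ,
    smul_smul, inv_mul_cancel₀ (Nat.cast_ne_zero.mpr hN), one_smul]

theorem sampleMean_sub_sampleMean (hN : N ≠ 0) (z : Fin N → E) :
    sampleMean (fun i => z i - sampleMean z) = 0 := by
  rw [sampleMean_sub, sampleMean_const hN, sub_self]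

variable {l m n : Type*}

theorem sampleMean_vecMulVec_left (u : Fin N → m → ℝ) (w : n → ℝ) :
    sampleMean (fun i => vecMulVec (u i) w) = vecMulVec (sampleMean u) w :=
  (((vecMulVecBilin ℝ ℝ).flip w).map_sampleMean u).symm

theorem sampleMean_vecMulVec_right (w : m → ℝ) (v : Fin N → n → ℝ) :
    sampleMean (fun i => vecMulVec w (v i)) = vecMulVec w (sampleMean v) :=
  ((vecMulVecBilin ℝ ℝ w).map_sampleMean v).symm

theorem sampleMean_vecMulVec_sub_sampleMean (hN : N ≠ 0) (u : Fin N → m → ℝ)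
    (v : Fin N → n → ℝ) :
    sampleMean (fun i => vecMulVec (u i - sampleMean u) (v i - sampleMean v)) = sampleCov u v := by
  simp only [sub_vecMulVec, vecMulVec_sub, sampleMean_sub, sampleMean_vecMulVec_left,
    sampleMean_vecMulVec_right, sampleMean_const hN, sampleCov]
  abel

theorem sampleCov_transpose (u : Fin N → m → ℝ) (v : Fin N → n → ℝ) :
    (sampleCov u v)ᵀ = sampleCov v u := by
  simp only [sampleCov, transpose_sub, transpose_vecMulVec, sampleMean, transpose_smul,
    transpose_sum]

variable [Fintype l]

theorem sampleMean_mulVec (A : Matrix m l ℝ) (v : Fin N → l → ℝ) :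
    sampleMean (fun i => A *ᵥ v i) = A *ᵥ sampleMean v :=
  (A.mulVecLin.map_sampleMean v).symm

theorem sampleCov_sub_mulVec_left (u : Fin N → m → ℝ) (A : Matrix m l ℝ) (v : Fin N → l → ℝ)
    (w : Fin N → n → ℝ) :
    sampleCov (fun i => u i - A *ᵥ v i) w = sampleCov u w - A * sampleCov v w := by
  have hcross : sampleMean (fun i => A * vecMulVec (v i) (w i)) =
      A * sampleMean (fun i => vecMulVec (v i) (w i)) :=
    ((mulLeftLinearMap n ℝ A).map_sampleMean _).symm
  simp only [sampleCov, sub_vecMulVec, sampleMean_sub, sampleMean_mulVec, hcross, ← mul_vecMulVec,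
    Matrix.mul_sub]
  abel

theorem sampleCov_sub_mulVec_right (w : Fin N → n → ℝ) (u : Fin N → m → ℝ) (A : Matrix m l ℝ)
    (v : Fin N → l → ℝ) :
    sampleCov w (fun i => u i - A *ᵥ v i) = sampleCov w u - sampleCov w v * Aᵀ := by
  rw [← transpose_transpose (sampleCov w _), sampleCov_transpose, sampleCov_sub_mulVec_left,
    transpose_sub, transpose_mul, sampleCov_transpose, sampleCov_transpose]

end SampleStatistics

section NormalEquations

variable {N : ℕ} {m k : Type*} [Fintype k] {x : Fin N → m → ℝ} {ν : Fin N → k → ℝ}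
  {P : Matrix m k ℝ} {μ : m → ℝ}

theorem sub_sub_mulVec_eq_sub_sampleMean (hμ : μ = sampleMean x - P *ᵥ sampleMean ν)
    (i : Fin N) :
    x i - μ - P *ᵥ ν i = (x i - P *ᵥ ν i) - sampleMean (fun j => x j - P *ᵥ ν j) := by
  rw [sampleMean_sub, sampleMean_mulVec, ← hμ, sub_right_comm]

theorem sampleMean_residual_eq_zero (hN : N ≠ 0) (hμ : μ = sampleMean x - P *ᵥ sampleMean ν) :
    sampleMean (fun i => x i - μ - P *ᵥ ν i) = 0 := by
  simp only [sub_sub_mulVec_eq_sub_sampleMean hμ, sampleMean_sub_sampleMean hN]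

theorem sampleMean_vecMulVec_sub_eq_mul (hμ : μ = sampleMean x - P *ᵥ sampleMean ν)
    (hP : P * sampleCov ν ν = sampleCov x ν) :
    sampleMean (fun i => vecMulVec (x i - μ) (ν i)) =
      P * sampleMean (fun i => vecMulVec (ν i) (ν i)) := by
  have hνν : sampleMean (fun i => vecMulVec (ν i) (ν i)) =
      sampleCov ν ν + vecMulVec (sampleMean ν) (sampleMean ν) := (sub_add_cancel _ _).symm
  rw [hνν, Matrix.mul_add, hP, mul_vecMulVec, sampleCov]
  simp only [sub_vecMulVec, sampleMean_sub, sampleMean_vecMulVec_right, hμ]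
  abel

theorem sampleMean_vecMulVec_residual (hN : N ≠ 0) (hμ : μ = sampleMean x - P *ᵥ sampleMean ν)
    (hP : P * sampleCov ν ν = sampleCov x ν) :
    sampleMean (fun i => vecMulVec (x i - μ - P *ᵥ ν i) (x i - μ - P *ᵥ ν i)) =
      sampleCov x x - P * (sampleCov x ν)ᵀ := by
  simp only [sub_sub_mulVec_eq_sub_sampleMean hμ]
  rw [sampleMean_vecMulVec_sub_sampleMean hN, sampleCov_sub_mulVec_left,
    sampleCov_sub_mulVec_right, sampleCov_sub_mulVec_right, ← sampleCov_transpose x ν,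
    Matrix.mul_sub, ← Matrix.mul_assoc, hP]
  abel

end NormalEquations

theorem stmt10_general (n N : ℕ) (hN : 0 < N)
    (x : Fin N → (Fin n → ℝ))
    (S : Mat3)
    (nu : Fin N → (Fin 3 → ℝ))
    (covxx : Matrix (Fin n) (Fin n) ℝ) (covxn : Matrix (Fin n) (Fin 3) ℝ)
    (covnn : Mat3)
    (hcovxx : covxx = (N : ℝ)⁻¹ • ∑ i, vecMulVec (x i) (x i)
        - vecMulVec ((N : ℝ)⁻¹ • ∑ i, x i) ((N : ℝ)⁻¹ • ∑ i, x i))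
    (hcovxn : covxn = (N : ℝ)⁻¹ • ∑ i, vecMulVec (x i) (nu i)
        - vecMulVec ((N : ℝ)⁻¹ • ∑ i, x i) ((N : ℝ)⁻¹ • ∑ i, nu i))
    (hcovnn : covnn = (N : ℝ)⁻¹ • ∑ i, vecMulVec (nu i) (nu i)
        - vecMulVec ((N : ℝ)⁻¹ • ∑ i, nu i) ((N : ℝ)⁻¹ • ∑ i, nu i))
    (hinv : IsUnit covnn.det)
    (P : Matrix (Fin n) (Fin 3) ℝ) (hP : P = covxn * covnn⁻¹)
    (μ : Fin n → ℝ) (hμ : μ = (N : ℝ)⁻¹ • ∑ i, x i - P.mulVec ((N : ℝ)⁻¹ • ∑ i, nu i))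
    (Sig : Matrix (Fin n) (Fin n) ℝ)
    (hSig : Sig = covxx - P * covxnᵀ + P * (S.trace • (1 : Mat3) - S) * Pᵀ) :
    ((N : ℝ)⁻¹ • ∑ i, (x i - μ - P.mulVec (nu i)) = 0) ∧
    ((N : ℝ)⁻¹ • ∑ i, vecMulVec (x i - μ) (nu i)
      = P * ((N : ℝ)⁻¹ • ∑ i, vecMulVec (nu i) (nu i))) ∧
    (Sig - P * (S.trace • (1 : Mat3) - S) * Pᵀ
      = (N : ℝ)⁻¹ • ∑ i,
          vecMulVec (x i - μ - P.mulVec (nu i)) (x i - μ - P.mulVec (nu i))) := by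
  change covxx = sampleCov x x at hcovxx
  change covxn = sampleCov x nu at hcovxn
  change covnn = sampleCov nu nu at hcovnn
  change μ = sampleMean x - P *ᵥ sampleMean nu at hμ
  subst hcovxx hcovxn hcovnn
  have hnormal : P * sampleCov nu nu = sampleCov x nu := by
    rw [hP, Matrix.nonsing_inv_mul_cancel_right _ _ hinv]
  refine ⟨sampleMean_residual_eq_zero hN.ne' hμ, sampleMean_vecMulVec_sub_eq_mul hμ hnormal, ?_⟩
  rw [hSig, add_sub_cancel_right]
  exact (sampleMean_vecMulVec_residual hN.ne' hμ hnormal).symm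

/-- The conditional MLE formulas `P = c̄ov(x,ν)c̄ov(ν,ν)⁻¹`,
`μ = Ē[x] − PĒ[ν]`, `Σ = c̄ov(x,x) − P·c̄ov(x,ν)ᵀ + P(tr(S)I − S)Pᵀ` satisfy the
first-order optimality conditions of the conditional log-likelihood. -/
theorem stmt10 (n N : ℕ) (hN : 0 < N)
    (R : Fin N → Mat3) (hR : ∀ i, R i ∈ SO3) (x : Fin N → (Fin n → ℝ))
    (U V : Mat3) (hU : U ∈ SO3) (hV : V ∈ SO3)
    (s : Fin 3 → ℝ) (S : Mat3) (hS : S = Matrix.diagonal s)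
    (nu : Fin N → (Fin 3 → ℝ))
    (hnu : ∀ i, nu i = vee ((Uᵀ * R i * V) * S - S * (Vᵀ * (R i)ᵀ * U)))
    (covxx : Matrix (Fin n) (Fin n) ℝ) (covxn : Matrix (Fin n) (Fin 3) ℝ)
    (covnn : Mat3)
    (hcovxx : covxx = (N : ℝ)⁻¹ • ∑ i, vecMulVec (x i) (x i)
        - vecMulVec ((N : ℝ)⁻¹ • ∑ i, x i) ((N : ℝ)⁻¹ • ∑ i, x i))
    (hcovxn : covxn = (N : ℝ)⁻¹ • ∑ i, vecMulVec (x i) (nu i)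
        - vecMulVec ((N : ℝ)⁻¹ • ∑ i, x i) ((N : ℝ)⁻¹ • ∑ i, nu i))
    (hcovnn : covnn = (N : ℝ)⁻¹ • ∑ i, vecMulVec (nu i) (nu i)
        - vecMulVec ((N : ℝ)⁻¹ • ∑ i, nu i) ((N : ℝ)⁻¹ • ∑ i, nu i))
    (hinv : IsUnit covnn.det)
    (P : Matrix (Fin n) (Fin 3) ℝ) (hP : P = covxn * covnn⁻¹)
    (μ : Fin n → ℝ) (hμ : μ = (N : ℝ)⁻¹ • ∑ i, x i - P.mulVec ((N : ℝ)⁻¹ • ∑ i, nu i))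
    (Sig : Matrix (Fin n) (Fin n) ℝ)
    (hSig : Sig = covxx - P * covxnᵀ + P * (S.trace • (1 : Mat3) - S) * Pᵀ) :
    ((N : ℝ)⁻¹ • ∑ i, (x i - μ - P.mulVec (nu i)) = 0) ∧
    ((N : ℝ)⁻¹ • ∑ i, vecMulVec (x i - μ) (nu i)
      = P * ((N : ℝ)⁻¹ • ∑ i, vecMulVec (nu i) (nu i))) ∧
    (Sig - P * (S.trace • (1 : Mat3) - S) * Pᵀ
      = (N : ℝ)⁻¹ • ∑ i,
          vecMulVec (x i - μ - P.mulVec (nu i)) (x i - μ - P.mulVec (nu i))) :=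
  stmt10_general n N hN x S nu covxx covxn covnn hcovxx hcovxn hcovnn hinv P hP μ hμ Sig hSig
end
end

section
/- Let (R_i, y_i) ∈ SO(3)×ℝⁿ with real weights w_i summing to 1, i = 1,…,N, let U, V ∈ SO(3), diagonal S ∈ ℝ^{3×3}, μ ∈ ℝⁿ, P ∈ ℝ^{n×3}, and let Σ_c ∈ ℝ^{n×n} be symmetric positive definite with Σ = Σ_c + P(tr(S)I − S)Pᵀ. Set ν_i = (UᵀR_iV·S − S·VᵀR_iᵀU)∨ and x_i = Σ_c^{1/2} y_i + μ + Pν_i. Let Ē denote the weighted mean Ē[z] = Σ_i w_i z_i, and define the weighted covariances c̄ov(·,·) accordingly. Assume Ē[y] = 0, Ē[yyᵀ] = I_n, Ē[ν] = 0, Ē[yνᵀ] = 0, and that c̄ov(ν,ν) is invertible. Then the estimation formulas recover the parameters: c̄ov(x,ν)·c̄ov(ν,ν)⁻¹ = P, Ē[x] − P·Ē[ν] = μ, and c̄ov(x,x) − P·c̄ov(x,ν)ᵀ + P(tr(S)I − S)Pᵀ = Σ. -/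
open Matrix MeasureTheory Real

noncomputable section

/-!
Write `x_i = A y_i + μ + P ν_i` with `A = Σ_c^{1/2}`. Since the weights sum to 1, the weighted
covariance ignores the constant `μ`, and it is bilinear and commutes with matrix factors, so
`c̄ov(x,ν) = A c̄ov(y,ν) + P c̄ov(ν,ν) = P c̄ov(ν,ν)` and
`c̄ov(x,x) = A c̄ov(y,y) Aᵀ + P c̄ov(ν,ν) Pᵀ = Σ_c + P c̄ov(ν,ν) Pᵀ`.
Each estimation formula then collapses to the corresponding parameter.
-/

section SquareRoot

variable {n 𝕜 : Type*} [RCLike 𝕜] [Fintype n] [DecidableEq n]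

lemma Matrix.IsHermitian.eigenvectorUnitary_mul_diagonal_mul_star {A : Matrix n n 𝕜}
    (hA : A.IsHermitian) (f : ℝ → ℝ) :
    (hA.eigenvectorUnitary : Matrix n n 𝕜) * diagonal (RCLike.ofReal ∘ f ∘ hA.eigenvalues) *
      (star hA.eigenvectorUnitary : Matrix n n 𝕜) = cfc f A := by
  rw [hA.cfc_eq]
  rfl

open scoped ComplexOrder in
lemma Matrix.PosSemidef.cfc_sqrt_mul_conjTranspose_self {A : Matrix n n 𝕜} (hA : A.PosSemidef) :
    cfc Real.sqrt A * (cfc Real.sqrt A)ᴴ = A := by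
  have hA' : IsSelfAdjoint A := hA.isHermitian
  have hsqrt : (cfc Real.sqrt A)ᴴ = cfc Real.sqrt A := cfc_predicate Real.sqrt A
  rw [hsqrt, ← cfc_mul Real.sqrt Real.sqrt A]
  conv_rhs => rw [← cfc_id' ℝ A]
  refine cfc_congr fun x hx => ?_
  obtain ⟨i, rfl⟩ := hA.isHermitian.spectrum_real_eq_range_eigenvalues ▸ hx
  exact Real.mul_self_sqrt (hA.eigenvalues_nonneg i)

end SquareRoot

section WeightedCovariance

variable {ι m n p q R : Type*} [Fintype ι] [CommRing R]

def weightedMean (w : ι → R) (a : ι → m → R) : m → R := ∑ i, w i • a i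

def weightedCov (w : ι → R) (a : ι → m → R) (b : ι → n → R) : Matrix m n R :=
  ∑ i, w i • vecMulVec (a i) (b i) - vecMulVec (weightedMean w a) (weightedMean w b)

variable {w : ι → R}

lemma weightedMean_add (a b : ι → m → R) :
    weightedMean w (fun i => a i + b i) = weightedMean w a + weightedMean w b := by
  simp only [weightedMean, smul_add, Finset.sum_add_distrib]

lemma weightedMean_const (hw : ∑ i, w i = 1) (c : m → R) : weightedMean w (fun _ => c) = c := by
  rw [weightedMean, ← Finset.sum_smul, hw, one_smul]

lemma weightedMean_mulVec [Fintype n] (M : Matrix m n R) (a : ι → n → R) :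
    weightedMean w (fun i => M *ᵥ a i) = M *ᵥ weightedMean w a := by
  simp only [weightedMean, mulVec_sum, mulVec_smul]

lemma weightedMean_affine [Fintype n] [Fintype p] (hw : ∑ i, w i = 1) (A : Matrix m n R)
    (P : Matrix m p R) (μ : m → R) (y : ι → n → R) (ν : ι → p → R) :
    weightedMean w (fun i => A *ᵥ y i + μ + P *ᵥ ν i) =
      A *ᵥ weightedMean w y + μ + P *ᵥ weightedMean w ν := by
  rw [weightedMean_add, weightedMean_add, weightedMean_const hw, weightedMean_mulVec,
    weightedMean_mulVec]

lemma sum_smul_vecMulVec_eq_vecMulVec_weightedMean (c : m → R) (b : ι → n → R) :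
    ∑ i, w i • vecMulVec c (b i) = vecMulVec c (weightedMean w b) := by
  ext k l
  simp only [Matrix.sum_apply, Matrix.smul_apply, vecMulVec_apply, weightedMean, Finset.sum_apply,
    Pi.smul_apply, smul_eq_mul, Finset.mul_sum, mul_left_comm]

lemma transpose_weightedCov (a : ι → m → R) (b : ι → n → R) :
    (weightedCov w a b)ᵀ = weightedCov w b a := by
  simp only [weightedCov, transpose_sub, transpose_sum, transpose_smul, transpose_vecMulVec]

lemma weightedCov_add_left (a a' : ι → m → R) (b : ι → n → R) :
    weightedCov w (fun i => a i + a' i) b = weightedCov w a b + weightedCov w a' b := by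
  simp only [weightedCov, weightedMean_add, add_vecMulVec, smul_add, Finset.sum_add_distrib]
  abel

lemma weightedCov_const_left (hw : ∑ i, w i = 1) (c : m → R) (b : ι → n → R) :
    weightedCov w (fun _ => c) b = 0 := by
  rw [weightedCov, weightedMean_const hw, sum_smul_vecMulVec_eq_vecMulVec_weightedMean, sub_self]

lemma weightedCov_mulVec_left [Fintype p] (M : Matrix m p R) (a : ι → p → R) (b : ι → n → R) :
    weightedCov w (fun i => M *ᵥ a i) b = M * weightedCov w a b := by
  simp only [weightedCov, weightedMean_mulVec, ← mul_vecMulVec, Matrix.mul_sub, Matrix.mul_sum,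
    Matrix.mul_smul]

lemma weightedCov_affine_left [Fintype n] [Fintype p] (hw : ∑ i, w i = 1) (A : Matrix m n R)
    (P : Matrix m p R) (μ : m → R) (y : ι → n → R) (ν : ι → p → R) (z : ι → q → R) :
    weightedCov w (fun i => A *ᵥ y i + μ + P *ᵥ ν i) z =
      A * weightedCov w y z + P * weightedCov w ν z := by
  rw [weightedCov_add_left, weightedCov_add_left, weightedCov_const_left hw,
    weightedCov_mulVec_left, weightedCov_mulVec_left, add_zero]

lemma weightedCov_affine_right [Fintype n] [Fintype p] (hw : ∑ i, w i = 1) (A : Matrix m n R)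
    (P : Matrix m p R) (μ : m → R) (y : ι → n → R) (ν : ι → p → R) (z : ι → q → R) :
    weightedCov w z (fun i => A *ᵥ y i + μ + P *ᵥ ν i) =
      weightedCov w z y * Aᵀ + weightedCov w z ν * Pᵀ := by
  rw [← transpose_weightedCov, weightedCov_affine_left hw, transpose_add, transpose_mul,
    transpose_mul, transpose_weightedCov, transpose_weightedCov]

end WeightedCovariance

theorem stmt12_general (n N : ℕ) (w : Fin N → ℝ) (hw : ∑ i, w i = 1)
    (y : Fin N → (Fin n → ℝ))
    (S : Mat3)
    (μ : Fin n → ℝ) (P : Matrix (Fin n) (Fin 3) ℝ)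
    (Sc : Matrix (Fin n) (Fin n) ℝ) (hSc : Sc.PosDef)
    (Sig : Matrix (Fin n) (Fin n) ℝ)
    (hSigdef : Sig = Sc + P * (S.trace • (1 : Mat3) - S) * Pᵀ)
    (nu : Fin N → (Fin 3 → ℝ))
    (x : Fin N → (Fin n → ℝ))
    (hx : ∀ i, x i = ((hSc.isHermitian.eigenvectorUnitary : Matrix (Fin n) (Fin n) ℝ) *
        diagonal (RCLike.ofReal ∘ Real.sqrt ∘ hSc.isHermitian.eigenvalues) *
        (star hSc.isHermitian.eigenvectorUnitary : Matrix (Fin n) (Fin n) ℝ)) *ᵥ y i + μ + P *ᵥ nu i)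
    (hEy : ∑ i, w i • y i = 0)
    (hEyy : ∑ i, w i • vecMulVec (y i) (y i) = (1 : Matrix (Fin n) (Fin n) ℝ))
    (hEynu : ∑ i, w i • vecMulVec (y i) (nu i) = 0)
    (covxx : Matrix (Fin n) (Fin n) ℝ) (covxn : Matrix (Fin n) (Fin 3) ℝ)
    (covnn : Mat3)
    (hcovxx : covxx = ∑ i, w i • vecMulVec (x i) (x i)
        - vecMulVec (∑ i, w i • x i) (∑ i, w i • x i))
    (hcovxn : covxn = ∑ i, w i • vecMulVec (x i) (nu i)
        - vecMulVec (∑ i, w i • x i) (∑ i, w i • nu i))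
    (hcovnn : covnn = ∑ i, w i • vecMulVec (nu i) (nu i)
        - vecMulVec (∑ i, w i • nu i) (∑ i, w i • nu i))
    (hinv : IsUnit covnn.det) :
    covxn * covnn⁻¹ = P ∧
    (∑ i, w i • x i) - P *ᵥ (∑ i, w i • nu i) = μ ∧
    covxx - P * covxnᵀ + P * (S.trace • (1 : Mat3) - S) * Pᵀ = Sig := by
  set A := cfc Real.sqrt Sc
  have hx : x = fun i => A *ᵥ y i + μ + P *ᵥ nu i := by
    funext i
    rw [hx i, hSc.isHermitian.eigenvectorUnitary_mul_diagonal_mul_star]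
  have hAA : A * Aᵀ = Sc := by
    rw [← conjTranspose_eq_transpose_of_trivial]
    exact hSc.posSemidef.cfc_sqrt_mul_conjTranspose_self
  change weightedMean w y = 0 at hEy
  have hyy : weightedCov w y y = 1 := by rw [weightedCov, hEyy, hEy, zero_vecMulVec, sub_zero]
  have hynu : weightedCov w y nu = 0 := by rw [weightedCov, hEynu, hEy, zero_vecMulVec, sub_zero]
  have hnuy : weightedCov w nu y = 0 := by rw [← transpose_weightedCov, hynu, transpose_zero]
  replace hcovnn : covnn = weightedCov w nu nu := hcovnn
  replace hcovxn : covxn = P * covnn := by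
    rw [hcovxn, hcovnn]
    change weightedCov w x nu = _
    rw [hx, weightedCov_affine_left hw, hynu, Matrix.mul_zero, zero_add]
  replace hcovxx : covxx = Sc + P * covnn * Pᵀ := by
    rw [hcovxx, hcovnn]
    change weightedCov w x x = _
    rw [hx, weightedCov_affine_left hw, weightedCov_affine_right hw, weightedCov_affine_right hw,
      hyy, hynu, hnuy]
    simp only [Matrix.one_mul, Matrix.zero_mul, add_zero, zero_add, hAA, Matrix.mul_assoc]
  refine ⟨?_, ?_, ?_⟩
  · rw [hcovxn, Matrix.mul_assoc, mul_nonsing_inv _ hinv, Matrix.mul_one]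
  · change weightedMean w x - P *ᵥ weightedMean w nu = μ
    rw [hx, weightedMean_affine hw, hEy, mulVec_zero, zero_add, add_sub_cancel_right]
  · have hsymm : covnnᵀ = covnn := by rw [hcovnn, transpose_weightedCov]
    rw [hcovxx, hcovxn, transpose_mul, hsymm, hSigdef, Matrix.mul_assoc]
    abel

/-- The marginal-conditional MLE applied to the sigma points of an MFG
recovers its parameters `(P, μ, Σ)`. -/
theorem stmt12 (n N : ℕ) (w : Fin N → ℝ) (hw : ∑ i, w i = 1)
    (R : Fin N → Mat3) (hR : ∀ i, R i ∈ SO3) (y : Fin N → (Fin n → ℝ))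
    (U V : Mat3) (hU : U ∈ SO3) (hV : V ∈ SO3)
    (s : Fin 3 → ℝ) (S : Mat3) (hS : S = Matrix.diagonal s)
    (μ : Fin n → ℝ) (P : Matrix (Fin n) (Fin 3) ℝ)
    (Sc : Matrix (Fin n) (Fin n) ℝ) (hSc : Sc.PosDef)
    (Sig : Matrix (Fin n) (Fin n) ℝ)
    (hSigdef : Sig = Sc + P * (S.trace • (1 : Mat3) - S) * Pᵀ)
    (nu : Fin N → (Fin 3 → ℝ))
    (hnu : ∀ i, nu i = vee ((Uᵀ * R i * V) * S - S * (Vᵀ * (R i)ᵀ * U)))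
    (x : Fin N → (Fin n → ℝ))
    (hx : ∀ i, x i = ((hSc.isHermitian.eigenvectorUnitary : Matrix (Fin n) (Fin n) ℝ) *
        diagonal (RCLike.ofReal ∘ Real.sqrt ∘ hSc.isHermitian.eigenvalues) *
        (star hSc.isHermitian.eigenvectorUnitary : Matrix (Fin n) (Fin n) ℝ)) *ᵥ y i + μ + P *ᵥ nu i)
    (hEy : ∑ i, w i • y i = 0)
    (hEyy : ∑ i, w i • vecMulVec (y i) (y i) = (1 : Matrix (Fin n) (Fin n) ℝ))
    (hEnu : ∑ i, w i • nu i = 0)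
    (hEynu : ∑ i, w i • vecMulVec (y i) (nu i) = 0)
    (covxx : Matrix (Fin n) (Fin n) ℝ) (covxn : Matrix (Fin n) (Fin 3) ℝ)
    (covnn : Mat3)
    (hcovxx : covxx = ∑ i, w i • vecMulVec (x i) (x i)
        - vecMulVec (∑ i, w i • x i) (∑ i, w i • x i))
    (hcovxn : covxn = ∑ i, w i • vecMulVec (x i) (nu i)
        - vecMulVec (∑ i, w i • x i) (∑ i, w i • nu i))
    (hcovnn : covnn = ∑ i, w i • vecMulVec (nu i) (nu i)
        - vecMulVec (∑ i, w i • nu i) (∑ i, w i • nu i))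
    (hinv : IsUnit covnn.det) :
    covxn * covnn⁻¹ = P ∧
    (∑ i, w i • x i) - P *ᵥ (∑ i, w i • nu i) = μ ∧
    covxx - P * covxnᵀ + P * (S.trace • (1 : Mat3) - S) * Pᵀ = Sig :=
  stmt12_general n N w hw y S μ P Sc hSc Sig hSigdef nu x hx hEy hEyy hEynu covxx covxn covnn hcovxx
    hcovxn hcovnn hinv

end
end

section
/- Let p(R,x) be the matrix Fisher–Gaussian density with parameters (μ, Σ, P, U, S, V) on SO(3)×ℝⁿ, let μ' ∈ ℝⁿ, and let Σ' ∈ ℝ^{n×n} be symmetric positive definite. Then for all R ∈ SO(3) and y ∈ ℝⁿ: ∫_{ℝⁿ} p(R,x) · ((2π)ⁿ det Σ')^{−1/2} · exp(−(1/2)(y − x − μ')ᵀ(Σ')⁻¹(y − x − μ')) dx equals the matrix Fisher–Gaussian density with parameters (μ + μ', Σ + Σ', P, U, S, V) evaluated at (R, y). In other words, adding an independent Gaussian N(μ', Σ') to the linear component of an MFG random variable yields an MFG with shifted mean and enlarged covariance. -/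
/-!
In `x`, the matrix Fisher–Gaussian density is `c(F)⁻¹ etr(FRᵀ)` times the Gaussian density
`N(μ_c(R), Σ_c)`, so the integral is the convolution of `N(μ_c(R), Σ_c)` with `N(μ', Σ')`,
namely `N(μ_c(R) + μ', Σ_c + Σ')`; and `Σ_c + Σ'` is the `Σ_c` of `Σ + Σ'`.
The Gaussian convolution comes from completing the square,
`x ⬝ A⁻¹ x + (d - x) ⬝ B⁻¹ (d - x) = (x - w) ⬝ (A⁻¹ + B⁻¹) (x - w) + d ⬝ (A + B)⁻¹ d`
with `w = (A⁻¹ + B⁻¹)⁻¹ B⁻¹ d`, where the Woodbury identity produces the constant term.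
-/

open Matrix MeasureTheory Real

noncomputable section

section Gaussian

variable {ι : Type*} [Fintype ι]

theorem integral_comp_mulVec [DecidableEq ι] {E : Type*} [NormedAddCommGroup E]
    [NormedSpace ℝ E] {M : Matrix ι ι ℝ} (hM : M.det ≠ 0) (f : (ι → ℝ) → E) :
    ∫ x, f (M *ᵥ x) = |M.det|⁻¹ • ∫ x, f x := by
  have hemb : MeasurableEmbedding (M *ᵥ ·) :=
    (Matrix.toLin' M).continuous_of_finiteDimensional.measurableEmbedding
      (mulVec_injective_iff_isUnit.2 (isUnit_iff_isUnit_det M |>.2 hM.isUnit))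
  rw [← hemb.integral_map, ← funext (toLin'_apply M),
    Real.map_matrix_volume_pi_eq_smul_volume_pi hM, integral_smul_measure,
    ENNReal.toReal_ofReal (abs_nonneg _), abs_inv]

theorem integral_exp_neg_half_dotProduct_self :
    ∫ x : ι → ℝ, exp (-(1 / 2) * (x ⬝ᵥ x)) = √(2 * π) ^ Fintype.card ι := by
  have hprod (x : ι → ℝ) : exp (-(1 / 2) * (x ⬝ᵥ x)) = ∏ i, exp (-(1 / 2) * x i ^ 2) := by
    simp only [← exp_sum, dotProduct, Finset.mul_sum, sq]
  simp_rw [hprod]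
  rw [integral_fintype_prod_volume_eq_pow (fun t : ℝ => exp (-(1 / 2) * t ^ 2)),
    integral_gaussian]
  norm_num [mul_comm]

open scoped MatrixOrder in
theorem integral_exp_neg_half_quadForm [DecidableEq ι] {C : Matrix ι ι ℝ} (hC : C.PosDef) :
    ∫ x : ι → ℝ, exp (-(1 / 2) * (x ⬝ᵥ C *ᵥ x)) = √(2 * π) ^ Fintype.card ι / √C.det := by
  set M := CFC.sqrt C
  have hMM : M * M = C := CFC.sqrt_mul_sqrt_self C hC.posSemidef.nonneg
  have hMsymm : Mᵀ = M := by
    simpa [conjTranspose_eq_transpose_of_trivial] using (CFC.sqrt_nonneg C).posSemidef.1.eq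
  have hdet : M.det * M.det = C.det := by rw [← det_mul, hMM]
  have hM : M.det ≠ 0 := fun h => hC.det_pos.ne' (by rw [← hdet, h, zero_mul])
  have hquad (x : ι → ℝ) : x ⬝ᵥ C *ᵥ x = (M *ᵥ x) ⬝ᵥ (M *ᵥ x) := by
    rw [← hMM, ← mulVec_mulVec, dotProduct_mulVec, ← mulVec_transpose, hMsymm]
  simp_rw [hquad]
  rw [integral_comp_mulVec hM (fun y => exp (-(1 / 2) * (y ⬝ᵥ y))),
    integral_exp_neg_half_dotProduct_self, ← hdet, ← abs_mul_abs_self,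
    sqrt_mul_self (abs_nonneg _), smul_eq_mul, div_eq_inv_mul]

end Gaussian

section Algebra

variable {ι K : Type*} [Fintype ι] [Field K]

theorem Matrix.IsSymm.dotProduct_mulVec_comm_s13 {M : Matrix ι ι K} (hM : M.IsSymm) (x y : ι → K) :
    x ⬝ᵥ M *ᵥ y = y ⬝ᵥ M *ᵥ x := by
  rw [dotProduct_mulVec, ← mulVec_transpose, hM.eq, dotProduct_comm]

variable [DecidableEq ι]

theorem det_inv_add_inv {A B : Matrix ι ι K} (hA : A.det ≠ 0) (hB : B.det ≠ 0) :
    (A⁻¹ + B⁻¹).det = (A + B).det / (A.det * B.det) := by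
  have hAB : IsUnit A ↔ IsUnit B := by
    simp only [isUnit_iff_isUnit_det, isUnit_iff_ne_zero]; tauto
  rw [Matrix.inv_add_inv hAB, det_mul, det_mul, det_nonsing_inv, det_nonsing_inv,
    Ring.inverse_eq_inv']
  field_simp

theorem quadForm_add_quadForm_sub {A B : Matrix ι ι K} (hA : A.IsSymm) (hB : B.IsSymm)
    (hAdet : A.det ≠ 0) (hBdet : B.det ≠ 0) (hABdet : (A + B).det ≠ 0) (x d : ι → K) :
    x ⬝ᵥ A⁻¹ *ᵥ x + (d - x) ⬝ᵥ B⁻¹ *ᵥ (d - x) =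
      (x - (A⁻¹ + B⁻¹)⁻¹ *ᵥ B⁻¹ *ᵥ d) ⬝ᵥ (A⁻¹ + B⁻¹) *ᵥ (x - (A⁻¹ + B⁻¹)⁻¹ *ᵥ B⁻¹ *ᵥ d)
        + d ⬝ᵥ (A + B)⁻¹ *ᵥ d := by
  set C := A⁻¹ + B⁻¹
  set w := C⁻¹ *ᵥ B⁻¹ *ᵥ d
  have hCdet : C.det ≠ 0 := by
    rw [det_inv_add_inv hAdet hBdet]; exact div_ne_zero hABdet (mul_ne_zero hAdet hBdet)
  have hBinv : B⁻¹.IsSymm := hB.inv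
  have hC : C.IsSymm := hA.inv.add hBinv
  have hCw : C *ᵥ w = B⁻¹ *ᵥ d := by
    rw [mulVec_mulVec, mul_nonsing_inv _ (isUnit_iff_ne_zero.2 hCdet), one_mulVec]
  have woodbury : B⁻¹ * C⁻¹ * B⁻¹ = B⁻¹ - (A + B)⁻¹ := by
    have := add_mul_mul_inv_eq_sub B 1 A 1 ((isUnit_iff_isUnit_det B).2 hBdet.isUnit)
      ((isUnit_iff_isUnit_det A).2 hAdet.isUnit) (by simpa [isUnit_iff_isUnit_det] using hCdet)
    simp only [mul_one, one_mul, add_comm B A] at this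
    rw [this, sub_sub_cancel]
  have hwCw : w ⬝ᵥ C *ᵥ w = d ⬝ᵥ B⁻¹ *ᵥ d - d ⬝ᵥ (A + B)⁻¹ *ᵥ d := by
    rw [hCw, hBinv.dotProduct_mulVec_comm_s13, mulVec_mulVec, mulVec_mulVec, woodbury, sub_mulVec,
      dotProduct_sub]
  have hCx : x ⬝ᵥ C *ᵥ x = x ⬝ᵥ A⁻¹ *ᵥ x + x ⬝ᵥ B⁻¹ *ᵥ x := by
    rw [add_mulVec, dotProduct_add]
  have hBsymm := hBinv.dotProduct_mulVec_comm_s13 x d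
  have hCsymm := hC.dotProduct_mulVec_comm_s13 w x
  rw [hCw] at hCsymm hwCw
  simp only [mulVec_sub, dotProduct_sub, sub_dotProduct, hCw]
  linear_combination -hCx + hCsymm + hBsymm - hwCw

end Algebra

section Density

variable {ι : Type*} [Fintype ι] [DecidableEq ι]

def mvGaussianPDF (Sig : Matrix ι ι ℝ) (z : ι → ℝ) : ℝ :=
  (√((2 * π) ^ Fintype.card ι * Sig.det))⁻¹ * exp (-(1 / 2) * (z ⬝ᵥ Sig⁻¹ *ᵥ z))

theorem integral_mvGaussianPDF {Sig : Matrix ι ι ℝ} (hSig : Sig.PosDef) :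
    ∫ x, mvGaussianPDF Sig x = 1 := by
  have := hSig.det_pos
  simp only [mvGaussianPDF]
  have hsqrt_pow : √((2 * π) ^ Fintype.card ι) = √(2 * π) ^ Fintype.card ι := by
    rw [sqrt_eq_iff_mul_self_eq (by positivity) (by positivity), ← mul_pow,
      mul_self_sqrt (by positivity)]
  rw [integral_const_mul, integral_exp_neg_half_quadForm hSig.inv, det_nonsing_inv,
    Ring.inverse_eq_inv', sqrt_inv, sqrt_mul (by positivity), hsqrt_pow]
  field_simp

theorem mvGaussianPDF_mul_mvGaussianPDF_sub {A B : Matrix ι ι ℝ} (hA : A.PosDef) (hB : B.PosDef)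
    (x d : ι → ℝ) :
    mvGaussianPDF A x * mvGaussianPDF B (d - x) =
      mvGaussianPDF (A + B) d *
        mvGaussianPDF (A⁻¹ + B⁻¹)⁻¹ (x - (A⁻¹ + B⁻¹)⁻¹ *ᵥ B⁻¹ *ᵥ d) := by
  have hC : (A⁻¹ + B⁻¹).PosDef := hA.inv.add hB.inv
  have hAB : (A + B).PosDef := hA.add hB
  have hdetC := det_inv_add_inv hA.det_pos.ne' hB.det_pos.ne'
  have hquad := quadForm_add_quadForm_sub (isHermitian_iff_isSymm.1 hA.isHermitian)
    (isHermitian_iff_isSymm.1 hB.isHermitian) hA.det_pos.ne' hB.det_pos.ne' hAB.det_pos.ne' x d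
  set p : ℝ := (2 * π) ^ Fintype.card ι
  have hp : 0 < p := by positivity
  have hsqrt : √(p * A.det) * √(p * B.det) = √(p * (A + B).det) * √(p * (A⁻¹ + B⁻¹)⁻¹.det) := by
    have := hAB.det_pos.ne'
    rw [← sqrt_mul (mul_pos hp hA.det_pos).le, ← sqrt_mul (mul_pos hp hAB.det_pos).le,
      det_nonsing_inv, Ring.inverse_eq_inv', hdetC]
    congr 1
    field_simp
  have hexp : exp (-(1 / 2) * (x ⬝ᵥ A⁻¹ *ᵥ x)) * exp (-(1 / 2) * ((d - x) ⬝ᵥ B⁻¹ *ᵥ (d - x))) =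
      exp (-(1 / 2) * (d ⬝ᵥ (A + B)⁻¹ *ᵥ d)) *
        exp (-(1 / 2) * ((x - (A⁻¹ + B⁻¹)⁻¹ *ᵥ B⁻¹ *ᵥ d) ⬝ᵥ (A⁻¹ + B⁻¹) *ᵥ
          (x - (A⁻¹ + B⁻¹)⁻¹ *ᵥ B⁻¹ *ᵥ d))) := by
    rw [← exp_add, ← exp_add, ← mul_add, ← mul_add, hquad, add_comm]
  simp only [mvGaussianPDF]
  rw [nonsing_inv_nonsing_inv _ (isUnit_iff_ne_zero.2 hC.det_pos.ne'), mul_mul_mul_comm,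
    ← mul_inv, hsqrt, hexp, mul_inv]
  ring

theorem integral_mvGaussianPDF_mul_mvGaussianPDF_sub {A B : Matrix ι ι ℝ} (hA : A.PosDef)
    (hB : B.PosDef) (d : ι → ℝ) :
    ∫ x, mvGaussianPDF A x * mvGaussianPDF B (d - x) = mvGaussianPDF (A + B) d := by
  simp_rw [mvGaussianPDF_mul_mvGaussianPDF_sub hA hB _ d]
  rw [integral_const_mul, integral_sub_right_eq_self (mvGaussianPDF _),
    integral_mvGaussianPDF (hA.inv.add hB.inv).inv, mul_one]

end Density

section MatrixFisherGaussian

theorem mfg_eq_mul_mvGaussianPDF {n : ℕ} (ν : Measure Mat3) (μ : Fin n → ℝ)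
    (Sig : Matrix (Fin n) (Fin n) ℝ) (P : Matrix (Fin n) (Fin 3) ℝ) (U S V R : Mat3)
    (x : Fin n → ℝ) :
    mfg ν μ Sig P U S V R x =
      (cF ν (U * S * Vᵀ))⁻¹ * exp ((U * S * Vᵀ * Rᵀ).trace) *
        mvGaussianPDF (sigmaC Sig P S) (x - (μ + P *ᵥ nuR U S V R)) := by
  simp only [mfg, mvGaussianPDF, Fintype.card_fin, mul_inv]
  ring

theorem sigmaC_add_right {n : ℕ} (Sig Sig' : Matrix (Fin n) (Fin n) ℝ)
    (P : Matrix (Fin n) (Fin 3) ℝ) (S : Mat3) :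
    sigmaC (Sig + Sig') P S = sigmaC Sig P S + Sig' := by
  simp only [sigmaC]
  abel

end MatrixFisherGaussian

theorem stmt13_general (n : ℕ) (ν : Measure Mat3)
    (μ μ' : Fin n → ℝ) (Sig Sig' : Matrix (Fin n) (Fin n) ℝ)
    (P : Matrix (Fin n) (Fin 3) ℝ) (U V : Mat3) (S : Mat3)
    (hc : (sigmaC Sig P S).PosDef) (hpd' : Sig'.PosDef) :
    ∀ R ∈ SO3, ∀ y : Fin n → ℝ,
      (∫ x : Fin n → ℝ,
          mfg ν μ Sig P U S V R x *
            ((Real.sqrt ((2 * Real.pi) ^ n * Sig'.det))⁻¹ *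
              Real.exp (-(1/2) * ((y - x - μ') ⬝ᵥ (Sig'⁻¹ *ᵥ (y - x - μ'))))))
        = mfg ν (μ + μ') (Sig + Sig') P U S V R y := by
  intro R _ y
  set m := μ + P *ᵥ nuR U S V R
  set d := y - m - μ'
  have hkernel (x : Fin n → ℝ) :
      (√((2 * π) ^ n * Sig'.det))⁻¹ * exp (-(1 / 2) * ((y - x - μ') ⬝ᵥ Sig'⁻¹ *ᵥ (y - x - μ'))) =
        mvGaussianPDF Sig' (d - (x - m)) := by
    rw [show d - (x - m) = y - x - μ' by simp only [d]; abel]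
    simp only [mvGaussianPDF, Fintype.card_fin]
  simp_rw [mfg_eq_mul_mvGaussianPDF, hkernel, mul_assoc]
  rw [integral_const_mul, integral_const_mul,
    integral_sub_right_eq_self
      (fun z => mvGaussianPDF (sigmaC Sig P S) z * mvGaussianPDF Sig' (d - z)) m,
    integral_mvGaussianPDF_mul_mvGaussianPDF_sub hc hpd', sigmaC_add_right,
    show y - (μ + μ' + P *ᵥ nuR U S V R) = d by simp only [d, m]; abel]

/-- Adding an independent Gaussian `N(μ', Σ')` to the linear component
of an MFG random variable yields an MFG with shifted mean and enlarged covariance. -/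
theorem stmt13 (n : ℕ) (ν : Measure Mat3) (hν : IsHaarSO3 ν)
    (μ μ' : Fin n → ℝ) (Sig Sig' : Matrix (Fin n) (Fin n) ℝ)
    (P : Matrix (Fin n) (Fin 3) ℝ) (U V : Mat3) (hU : U ∈ SO3) (hV : V ∈ SO3)
    (s : Fin 3 → ℝ) (S : Mat3) (hS : S = Matrix.diagonal s)
    (hSig : Sig.IsSymm) (hc : (sigmaC Sig P S).PosDef)
    (hSig' : Sig'.IsSymm) (hpd' : Sig'.PosDef) :
    ∀ R ∈ SO3, ∀ y : Fin n → ℝ,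
      (∫ x : Fin n → ℝ,
          mfg ν μ Sig P U S V R x *
            ((Real.sqrt ((2 * Real.pi) ^ n * Sig'.det))⁻¹ *
              Real.exp (-(1/2) * ((y - x - μ') ⬝ᵥ (Sig'⁻¹ *ᵥ (y - x - μ'))))))
        = mfg ν (μ + μ') (Sig + Sig') P U S V R y :=
  stmt13_general n ν μ μ' Sig Sig' P U V S hc hpd'

end
end

section
/- Let U, V, U⁺, V⁺, R ∈ SO(3) and let S ∈ ℝ^{3×3} be symmetric. Set Ũ = UᵀU⁺, Ṽ = VᵀV⁺, S̃ = ŨᵀSṼ, Q = UᵀRV, and Q⁺ = (U⁺)ᵀRV⁺. Then (QS − SQᵀ)∨ = Ũ·(Q⁺S̃ᵀ − S̃(Q⁺)ᵀ)∨. (This expresses the tangent deviation ν_R of a prior MFG in terms of the principal axes U⁺, V⁺ of the posterior matrix Fisher parameter.) -/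
open Matrix MeasureTheory Real

noncomputable section

/-! Since `V⁺V⁺ᵀ = 1` and `UUᵀ = 1`, one has `Q⁺S̃ᵀ = Ũᵀ(QS)Ũ`, so the skew matrix
`Q⁺S̃ᵀ − S̃Q⁺ᵀ` is `QS − SQᵀ` conjugated by `Ũ ∈ SO(3)`. The vee map is equivariant under such
conjugations, `(AᵀMA)∨ = AᵀM∨`, which comes from the cofactor identity
`(Av) × (Aw) = adj(A)ᵀ(v × w)` together with `adj A = Aᵀ` on `SO(3)`. -/

theorem hat_mulVec_mul (A : Mat3) (v : Fin 3 → ℝ) :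
    hat (A *ᵥ v) * A = A.adjugateᵀ * hat v := by
  ext i j
  fin_cases i <;> fin_cases j <;>
    simp [hat, Matrix.mul_apply, Matrix.mulVec, dotProduct, Fin.sum_univ_three,
      Matrix.adjugate_fin_three] <;> ring

theorem vee_hat (v : Fin 3 → ℝ) : vee (hat v) = v := by
  ext i; fin_cases i <;> simp [vee, hat]

theorem hat_vee_of_transpose_eq_neg {A : Mat3} (h : Aᵀ = -A) : hat (vee A) = A := by
  ext i j
  have hij := congrFun₂ h i j
  have hji := congrFun₂ h j i
  fin_cases i <;> fin_cases j <;> simp [hat, vee] at hij hji ⊢ <;> linarith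

section SymmetricConjugation

variable {n α : Type*} [Fintype n] [CommRing α]

theorem transpose_eq_neg_mul_sub_mul_transpose {S : Matrix n n α} (hS : S.IsSymm)
    (Q : Matrix n n α) :
    (Q * S - S * Qᵀ)ᵀ = -(Q * S - S * Qᵀ) := by
  rw [transpose_sub, transpose_mul, transpose_mul, transpose_transpose, hS.eq, neg_sub]

theorem transpose_mul_mul_sub_transpose_of_isSymm {S : Matrix n n α} (hS : S.IsSymm)
    (A Q : Matrix n n α) :
    Aᵀ * (Q * S) * A - (Aᵀ * (Q * S) * A)ᵀ = Aᵀ * (Q * S - S * Qᵀ) * A := by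
  rw [transpose_mul, transpose_mul, transpose_mul, transpose_transpose, hS.eq,
    Matrix.mul_sub, Matrix.sub_mul, ← Matrix.mul_assoc Aᵀ (S * Qᵀ)]

end SymmetricConjugation

theorem mul_transpose_eq_one_of_mem_SO3 {A : Mat3} (hA : A ∈ SO3) : A * Aᵀ = 1 :=
  mul_eq_one_comm.mp hA.1

theorem transpose_mem_SO3_s14 {A : Mat3} (hA : A ∈ SO3) : Aᵀ ∈ SO3 :=
  ⟨by rw [transpose_transpose, mul_transpose_eq_one_of_mem_SO3 hA], by rw [det_transpose, hA.2]⟩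

theorem transpose_mul_mem_SO3 {A B : Mat3} (hA : A ∈ SO3) (hB : B ∈ SO3) : Aᵀ * B ∈ SO3 := by
  refine ⟨?_, by rw [det_mul, det_transpose, hA.2, hB.2, one_mul]⟩
  rw [transpose_mul, transpose_transpose, Matrix.mul_assoc, ← Matrix.mul_assoc A,
    mul_transpose_eq_one_of_mem_SO3 hA, Matrix.one_mul, hB.1]

theorem adjugate_eq_transpose_of_mem_SO3 {A : Mat3} (hA : A ∈ SO3) : A.adjugate = Aᵀ :=
  calc A.adjugate = Aᵀ * (A * A.adjugate) := by rw [← Matrix.mul_assoc, hA.1, Matrix.one_mul]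
    _ = Aᵀ := by rw [mul_adjugate, hA.2, one_smul, Matrix.mul_one]

theorem hat_mulVec_of_mem_SO3 {A : Mat3} (hA : A ∈ SO3) (v : Fin 3 → ℝ) :
    hat (A *ᵥ v) = A * hat v * Aᵀ := by
  calc hat (A *ᵥ v) = hat (A *ᵥ v) * A * Aᵀ := by
        rw [Matrix.mul_assoc, mul_transpose_eq_one_of_mem_SO3 hA, Matrix.mul_one]
    _ = A * hat v * Aᵀ := by
        rw [hat_mulVec_mul, adjugate_eq_transpose_of_mem_SO3 hA, transpose_transpose]

theorem vee_transpose_mul_mul_of_mem_SO3 {A M : Mat3} (hA : A ∈ SO3) (hM : Mᵀ = -M) :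
    vee (Aᵀ * M * A) = Aᵀ *ᵥ vee M := by
  have h := hat_mulVec_of_mem_SO3 (transpose_mem_SO3_s14 hA) (vee M)
  rw [transpose_transpose, hat_vee_of_transpose_eq_neg hM] at h
  rw [← h, vee_hat]

theorem stmt14_general (U V Up Vp R : Mat3) (hU : U ∈ SO3)
    (hUp : Up ∈ SO3) (hVp : Vp ∈ SO3)
    (S : Mat3) (hS : S.IsSymm)
    (Ut Vt St Q Qp : Mat3)
    (hUt : Ut = Uᵀ * Up) (hVt : Vt = Vᵀ * Vp) (hSt : St = Utᵀ * S * Vt)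
    (hQ : Q = Uᵀ * R * V) (hQp : Qp = Upᵀ * R * Vp) :
    vee (Q * S - S * Qᵀ) = Ut *ᵥ vee (Qp * Stᵀ - St * Qpᵀ) := by
  have hUt_mem : Ut ∈ SO3 := hUt ▸ transpose_mul_mem_SO3 hU hUp
  have hQpSt : Qp * Stᵀ = Utᵀ * (Q * S) * Ut := by
    subst hQ hQp hSt hUt hVt
    simp only [transpose_mul, transpose_transpose, hS.eq, ← Matrix.mul_assoc]
    rw [Matrix.mul_assoc _ Vp, mul_transpose_eq_one_of_mem_SO3 hVp, Matrix.mul_one,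
      Matrix.mul_assoc _ U, mul_transpose_eq_one_of_mem_SO3 hU, Matrix.mul_one]
  have hStQp : St * Qpᵀ = (Qp * Stᵀ)ᵀ := by rw [transpose_mul, transpose_transpose]
  rw [hStQp, hQpSt, transpose_mul_mul_sub_transpose_of_isSymm hS,
    vee_transpose_mul_mul_of_mem_SO3 hUt_mem (transpose_eq_neg_mul_sub_mul_transpose hS Q),
    mulVec_mulVec, mul_transpose_eq_one_of_mem_SO3 hUt_mem, one_mulVec]

/-- With `Ũ = UᵀU⁺`, `Ṽ = VᵀV⁺`, `S̃ = ŨᵀSṼ`, `Q = UᵀRV`,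
`Q⁺ = (U⁺)ᵀRV⁺`, one has `(QS − SQᵀ)∨ = Ũ·(Q⁺S̃ᵀ − S̃(Q⁺)ᵀ)∨`. -/
theorem stmt14 (U V Up Vp R : Mat3) (hU : U ∈ SO3) (hV : V ∈ SO3)
    (hUp : Up ∈ SO3) (hVp : Vp ∈ SO3) (hR : R ∈ SO3)
    (S : Mat3) (hS : S.IsSymm)
    (Ut Vt St Q Qp : Mat3)
    (hUt : Ut = Uᵀ * Up) (hVt : Vt = Vᵀ * Vp) (hSt : St = Utᵀ * S * Vt)
    (hQ : Q = Uᵀ * R * V) (hQp : Qp = Upᵀ * R * Vp) :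
    vee (Q * S - S * Qᵀ) = Ut *ᵥ vee (Qp * Stᵀ - St * Qpᵀ) :=
  stmt14_general U V Up Vp R hU hUp hVp S hS Ut Vt St Q Qp hUt hVt hSt hQ hQp


end
end

section
/- Let U', V' ∈ O(3) (real 3×3 matrices with RᵀR = I), let S' = diag(s₁', s₂', s₃'), F = U'S'(V')ᵀ, let a = (a₁,a₂,a₃) ∈ ℝ³ with ‖a‖ = 1, θ ∈ ℝ, and let 𝒟 be a diagonal matrix with diagonal entries in {+1, −1}. Set R = U'·exp(θ·â)·𝒟·(V')ᵀ ∈ O(3), where exp is the matrix exponential. Then tr(FᵀR) = Σ_{i=1}^{3} 𝒟_{ii}·s_i'·(a_i² + (1 − a_i²)·cos θ). Equivalently, tr(FᵀR) = [s₁' s₂' s₃']·𝒟·[a₁² + (a₂²+a₃²)cos θ; a₂² + (a₁²+a₃²)cos θ; a₃² + (a₁²+a₂²)cos θ]. -/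
open Matrix MeasureTheory Real

noncomputable section

/-! Since `â³ = -‖a‖² â`, the even and odd parts of the exponential series of `θ â` are the
cosine and sine series, which gives Rodrigues' formula
`exp (θ â) = 1 + sin θ â + (1 - cos θ) â²`. Orthogonality of `U'` and `V'` reduces `tr (Fᵀ R)`
to `tr (S' exp (θ â) 𝒟) = Σᵢ sᵢ' exp (θ â)ᵢᵢ 𝒟ᵢᵢ`, and the diagonal of `â²` is `aᵢ² - ‖a‖²`. -/

section Rodrigues

variable {𝔸 : Type*} [Ring 𝔸] [Algebra ℝ 𝔸]

theorem pow_two_mul_add_one_of_pow_three_eq_neg {A : 𝔸} (hA : A ^ 3 = -A) (k : ℕ) :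
    A ^ (2 * k + 1) = ((-1 : ℝ) ^ k) • A := by
  induction k with
  | zero => simp
  | succ k ih =>
    rw [show 2 * (k + 1) + 1 = 2 * k + 1 + 2 by ring, pow_add, ih, smul_mul_assoc,
      ← pow_succ', hA, pow_succ, mul_neg_one, neg_smul, smul_neg]

theorem pow_two_mul_add_two_of_pow_three_eq_neg {A : 𝔸} (hA : A ^ 3 = -A) (k : ℕ) :
    A ^ (2 * k + 2) = ((-1 : ℝ) ^ k) • A ^ 2 := by
  rw [pow_succ, pow_two_mul_add_one_of_pow_three_eq_neg hA, smul_mul_assoc, ← sq]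

variable [TopologicalSpace 𝔸] [IsTopologicalRing 𝔸] [ContinuousSMul ℝ 𝔸] [T2Space 𝔸]

theorem exp_smul_of_pow_three_eq_neg {A : 𝔸} (hA : A ^ 3 = -A) (θ : ℝ) :
    NormedSpace.exp (θ • A) = 1 + Real.sin θ • A + (1 - Real.cos θ) • A ^ 2 := by
  have hodd : HasSum (fun k : ℕ => ((2 * k + 1).factorial : ℝ)⁻¹ • (θ • A) ^ (2 * k + 1))
      (Real.sin θ • A) := by
    refine ((Real.hasSum_sin θ).smul_const A).congr_fun fun k => ?_
    rw [smul_pow, pow_two_mul_add_one_of_pow_three_eq_neg hA, smul_smul, smul_smul]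
    congr 1
    field_simp
  have hcos_tail : HasSum (fun k : ℕ => (-1 : ℝ) ^ k * θ ^ (2 * k + 2) / (2 * k + 2).factorial)
      (1 - Real.cos θ) := by
    have h := ((hasSum_nat_add_iff' 1).mpr (Real.hasSum_cos θ)).neg
    simp only [Finset.range_one, Finset.sum_singleton, mul_zero, pow_zero, Nat.factorial_zero,
      Nat.cast_one, div_one, mul_one, neg_sub] at h
    refine h.congr_fun fun k => ?_
    rw [mul_add, mul_one, pow_succ]
    ring
  have heven : HasSum (fun k : ℕ => ((2 * k).factorial : ℝ)⁻¹ • (θ • A) ^ (2 * k))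
      (1 + (1 - Real.cos θ) • A ^ 2) := by
    refine (hasSum_nat_add_iff' 1).mp ?_
    simp only [Finset.range_one, Finset.sum_singleton, mul_zero, pow_zero, Nat.factorial_zero,
      Nat.cast_one, inv_one, one_smul, add_sub_cancel_left]
    refine (hcos_tail.smul_const (A ^ 2)).congr_fun fun k => ?_
    rw [mul_add, mul_one, smul_pow, pow_two_mul_add_two_of_pow_three_eq_neg hA, smul_smul,
      smul_smul]
    congr 1
    field_simp
  have hexp :=
    HasSum.even_add_odd (f := fun n : ℕ => (n.factorial : ℝ)⁻¹ • (θ • A) ^ n) heven hodd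
  rw [congr_fun (NormedSpace.exp_eq_tsum ℝ) (θ • A), hexp.tsum_eq]
  abel

end Rodrigues

theorem Matrix.trace_transpose_mul_of_orthogonal {m n k p R : Type*} [Fintype m] [Fintype n]
    [Fintype k] [Fintype p] [DecidableEq n] [DecidableEq k] [CommRing R]
    {U : Matrix m n R} {V : Matrix p k R} (hU : Uᵀ * U = 1) (hV : Vᵀ * V = 1)
    (A B : Matrix n k R) :
    ((U * A * Vᵀ)ᵀ * (U * B * Vᵀ)).trace = (Aᵀ * B).trace := by
  calc ((U * A * Vᵀ)ᵀ * (U * B * Vᵀ)).trace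
      = (V * (Aᵀ * B) * Vᵀ).trace := by
        simp only [transpose_mul, transpose_transpose, Matrix.mul_assoc]
        rw [← Matrix.mul_assoc Uᵀ U, hU, Matrix.one_mul]
    _ = (Vᵀ * V * (Aᵀ * B)).trace := by rw [trace_mul_comm, Matrix.mul_assoc]
    _ = (Aᵀ * B).trace := by rw [hV, Matrix.one_mul]

theorem Matrix.trace_diagonal_mul_mul_diagonal {n R : Type*} [Fintype n] [DecidableEq n]
    [CommSemiring R] (s d : n → R) (M : Matrix n n R) :
    (diagonal s * M * diagonal d).trace = ∑ i, s i * M i i * d i := by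
  simp [trace, diagonal_mul, mul_diagonal]

theorem hat_sq (a : Fin 3 → ℝ) : hat a ^ 2 = vecMulVec a a - (a ⬝ᵥ a) • 1 := by
  ext i j
  fin_cases i <;> fin_cases j <;>
    simp [hat, sq, Matrix.mul_apply, Fin.sum_univ_three, vecMulVec_apply, dotProduct] <;> ring

theorem hat_pow_three (a : Fin 3 → ℝ) : hat a ^ 3 = -(a ⬝ᵥ a) • hat a := by
  ext i j
  fin_cases i <;> fin_cases j <;>
    simp [hat, pow_succ, Matrix.mul_apply, Fin.sum_univ_three, dotProduct] <;> ring

theorem hat_apply_self (a : Fin 3 → ℝ) (i : Fin 3) : hat a i i = 0 := by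
  fin_cases i <;> simp [hat]

theorem exp_smul_hat_apply_self {a : Fin 3 → ℝ} (ha : a ⬝ᵥ a = 1) (θ : ℝ) (i : Fin 3) :
    NormedSpace.exp (θ • hat a) i i = a i ^ 2 + (1 - a i ^ 2) * Real.cos θ := by
  have hcube : hat a ^ 3 = -hat a := by rw [hat_pow_three, ha, neg_one_smul]
  rw [exp_smul_of_pow_three_eq_neg hcube, hat_sq, ha]
  simp [hat_apply_self, vecMulVec_apply]
  ring

theorem stmt16_general (U' V' : Mat3) (hU' : U'ᵀ * U' = 1) (hV' : V'ᵀ * V' = 1)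
    (s a : Fin 3 → ℝ) (ha : a ⬝ᵥ a = 1) (θ : ℝ)
    (d : Fin 3 → ℝ)
    (F : Mat3) (hF : F = U' * Matrix.diagonal s * V'ᵀ)
    (R : Mat3)
    (hR : R = U' * NormedSpace.exp (θ • hat a) * Matrix.diagonal d * V'ᵀ) :
    (Fᵀ * R).trace = ∑ i, d i * s i * (a i ^ 2 + (1 - a i ^ 2) * Real.cos θ) := by
  subst hF hR
  rw [Matrix.mul_assoc U' (NormedSpace.exp _), trace_transpose_mul_of_orthogonal hU' hV',
    diagonal_transpose, ← Matrix.mul_assoc, trace_diagonal_mul_mul_diagonal]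
  refine Finset.sum_congr rfl fun i _ => ?_
  rw [exp_smul_hat_apply_self ha]
  ring

/-- For `U', V' ∈ O(3)`, `S' = diag(s)`, `F = U'S'(V')ᵀ`, unit `a`,
`𝒟` diagonal with entries `±1`, and `R = U'·exp(θâ)·𝒟·(V')ᵀ`,
`tr(FᵀR) = Σᵢ 𝒟ᵢᵢ sᵢ' (aᵢ² + (1 − aᵢ²) cos θ)`. -/
theorem stmt16 (U' V' : Mat3) (hU' : U'ᵀ * U' = 1) (hV' : V'ᵀ * V' = 1)
    (s a : Fin 3 → ℝ) (ha : a ⬝ᵥ a = 1) (θ : ℝ)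
    (d : Fin 3 → ℝ) (hd : ∀ i, d i = 1 ∨ d i = -1)
    (F : Mat3) (hF : F = U' * Matrix.diagonal s * V'ᵀ)
    (R : Mat3)
    (hR : R = U' * NormedSpace.exp (θ • hat a) * Matrix.diagonal d * V'ᵀ) :
    (Fᵀ * R).trace = ∑ i, d i * s i * (a i ^ 2 + (1 - a i ^ 2) * Real.cos θ) :=
  stmt16_general U' V' hU' hV' s a ha θ d F hF R hR

end
end
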